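/- arXiv:2605.11566 — 2 statements merged into one kernel-verified Lean document; each statement's English description precedes it below -/
import Mathlib

section
/- (Cuntz–Krieger Uniqueness Theorem) Let G be an effective ample Hausdorff groupoid, R a unital commutative ring, and (Σ, i, q) a discrete twist over G such that X_Σ = {u ∈ Σ⁽⁰⁾ : Σᵤᵘ ⊆ Iso(Σ)°} is dense in Σ⁽⁰⁾. Let Q be a ring and π : A_R(G; Σ) → Q a ring homomorphism. Then π is injective if and only if π(r 1̃_W) ≠ 0 for every nonempty compact open subset W of Σ⁽⁰⁾ and every r ∈ R \ {0}. -/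
open Set Function TopologicalSpace Classical
noncomputable section

universe u v w

/-- An étale topological groupoid, encoded with total operations:
`mul a b` is only meaningful when `src a = rng b`. -/
structure EtaleGroupoid (G : Type u) [TopologicalSpace G] where
  mul : G → G → G
  inv : G → G
  src : G → G
  rng : G → G
  rng_mul_self : ∀ g, mul (rng g) g = g
  mul_src_self : ∀ g, mul g (src g) = g
  src_inv : ∀ g, src (inv g) = rng g
  rng_inv : ∀ g, rng (inv g) = src g
  inv_inv : ∀ g, inv (inv g) = g
  inv_mul_self : ∀ g, mul (inv g) g = src g
  mul_inv_self : ∀ g, mul g (inv g) = rng g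
  mul_assoc' : ∀ a b c, src a = rng b → src b = rng c →
    mul (mul a b) c = mul a (mul b c)
  src_mul : ∀ a b, src a = rng b → src (mul a b) = src b
  rng_mul : ∀ a b, src a = rng b → rng (mul a b) = rng a
  continuous_inv : Continuous inv
  continuousOn_mul :
    ContinuousOn (fun p : G × G => mul p.1 p.2) {p : G × G | src p.1 = rng p.2}
  isLocalHomeomorph_src : IsLocalHomeomorph src

namespace EtaleGroupoid

variable {G : Type u} [TopologicalSpace G] (𝒢 : EtaleGroupoid G)

/-- The unit space `G⁽⁰⁾`. -/
def unitSpace : Set G := Set.range 𝒢.src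

/-- The isotropy bundle `Iso(G) = {γ : r γ = s γ}`. -/
def iso : Set G := {g | 𝒢.rng g = 𝒢.src g}

/-- The isotropy group `Gᵤᵘ` at a unit `u`. -/
def isoAt (u : G) : Set G := {g | 𝒢.rng g = u ∧ 𝒢.src g = u}

/-- `U` is a bisection: `src` and `rng` are injective on `U`. -/
def IsBisection (U : Set G) : Prop := Set.InjOn 𝒢.src U ∧ Set.InjOn 𝒢.rng U

/-- `U` is a compact open bisection. -/
def IsCOB (U : Set G) : Prop := IsCompact U ∧ IsOpen U ∧ 𝒢.IsBisection U

/-- Pointwise inverse of a set. -/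
def setInv (U : Set G) : Set G := 𝒢.inv '' U

/-- Pointwise product of two sets (only composable products). -/
def setMul (U V : Set G) : Set G :=
  {g | ∃ a ∈ U, ∃ b ∈ V, 𝒢.src a = 𝒢.rng b ∧ g = 𝒢.mul a b}

/-- `H` is a subgroupoid of `G`. -/
def IsSubgroupoid (H : Set G) : Prop :=
  (∀ a ∈ H, 𝒢.inv a ∈ H) ∧
  (∀ a ∈ H, ∀ b ∈ H, 𝒢.src a = 𝒢.rng b → 𝒢.mul a b ∈ H) ∧
  (∀ a ∈ H, 𝒢.src a ∈ H)

/-- The groupoid is effective: the interior of the isotropy is the unit space. -/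
def Effective : Prop := interior 𝒢.iso = 𝒢.unitSpace

/-- A continuous (i.e. locally constant) `Rˣ`-valued 2-cocycle on `G`. -/
def IsCocycle {R : Type w} [CommRing R] (c : G → G → Rˣ) : Prop :=
  IsLocallyConstant (fun p : {p : G × G // 𝒢.src p.1 = 𝒢.rng p.2} => c p.1.1 p.1.2) ∧
  (∀ a b d, 𝒢.src a = 𝒢.rng b → 𝒢.src b = 𝒢.rng d →
    c a b * c (𝒢.mul a b) d = c b d * c a (𝒢.mul b d)) ∧
  (∀ g, c (𝒢.rng g) g = 1 ∧ c g (𝒢.src g) = 1)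

/-- Membership in the (cocycle-twisted) Steinberg algebra `A_R(G)`:
locally constant, compactly supported functions `G → R`. -/
def MemSt {R : Type w} [CommRing R] (f : G → R) : Prop :=
  IsLocallyConstant f ∧ ∃ K : Set G, IsCompact K ∧ Function.support f ⊆ K

/-- Convolution on `A_R(G;σ)` twisted by a 2-cocycle `c`. -/
noncomputable def convC {R : Type w} [CommRing R] (c : G → G → Rˣ) (f g : G → R) :
    G → R := fun γ =>
  ∑ᶠ p : G × G,
    if 𝒢.src p.1 = 𝒢.rng p.2 ∧ 𝒢.mul p.1 p.2 = γ then
      (c p.1 p.2 : R) * f p.1 * g p.2 else 0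

/-- A continuous `Γ`-grading on `G` (for a discrete group `Γ`). -/
def IsGrading {Γ : Type*} [Group Γ] (c : G → Γ) : Prop :=
  IsLocallyConstant c ∧ ∀ a b, 𝒢.src a = 𝒢.rng b → c (𝒢.mul a b) = c a * c b

end EtaleGroupoid

/-- An ample groupoid: étale with a basis of compact open bisections. -/
structure AmpleGroupoid (G : Type u) [TopologicalSpace G] extends EtaleGroupoid G where
  ample : TopologicalSpace.IsTopologicalBasis {U : Set G | toEtaleGroupoid.IsCOB U}

/-- A discrete twist `G⁽⁰⁾ × Rˣ → Σ → G` over an ample groupoid `G`. -/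
structure DiscreteTwist (R : Type w) [CommRing R] {G : Type u} {S : Type v}
    [TopologicalSpace G] [TopologicalSpace S]
    (𝒢 : AmpleGroupoid G) (𝒮 : EtaleGroupoid S) where
  i : G → Rˣ → S
  q : S → G
  continuousOn_i : ∀ t : Rˣ, ContinuousOn (fun x => i x t) 𝒢.unitSpace
  continuous_q : Continuous q
  i_injOn : Set.InjOn (fun p : G × Rˣ => i p.1 p.2) (𝒢.unitSpace ×ˢ (Set.univ : Set Rˣ))
  q_surj : Function.Surjective q
  exact' : ∀ x ∈ 𝒢.unitSpace, q ⁻¹' {x} = {σ | ∃ t : Rˣ, σ = i x t}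
  i_mul : ∀ x ∈ 𝒢.unitSpace, ∀ s t : Rˣ, 𝒮.mul (i x s) (i x t) = i x (s * t)
  unit_eq : 𝒮.unitSpace = (fun x => i x 1) '' 𝒢.unitSpace
  q_mul : ∀ a b, 𝒮.src a = 𝒮.rng b → q (𝒮.mul a b) = 𝒢.mul (q a) (q b)
  q_inv : ∀ a, q (𝒮.inv a) = 𝒢.inv (q a)
  q_src : ∀ a, q (𝒮.src a) = 𝒢.src (q a)
  q_rng : ∀ a, q (𝒮.rng a) = 𝒢.rng (q a)
  q_unit_bij : Set.BijOn q 𝒮.unitSpace 𝒢.unitSpace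
  central : ∀ (σ : S) (t : Rˣ),
    𝒮.mul (i (𝒢.rng (q σ)) t) σ = 𝒮.mul σ (i (𝒢.src (q σ)) t)
  loc_triv : ∀ α : G, ∃ B : Set G, IsOpen B ∧ α ∈ B ∧ 𝒢.IsBisection B ∧
    ∃ P : G → S, ContinuousOn P B ∧ (∀ β ∈ B, q (P β) = β) ∧
      (∀ t : Rˣ, ContinuousOn (fun β => 𝒮.mul (i (𝒢.rng β) t) (P β)) B) ∧
      (∀ σ : S, q σ ∈ B →
        ∃! p : G × Rˣ, p.1 ∈ B ∧ 𝒮.mul (i (𝒢.rng p.1) p.2) (P p.1) = σ) ∧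
      (∀ t : Rˣ, ∀ V ⊆ B, IsOpen V →
        IsOpen ((fun β => 𝒮.mul (i (𝒢.rng β) t) (P β)) '' V))

namespace DiscreteTwist

variable {R : Type w} [CommRing R] {G : Type u} {S : Type v}
  [TopologicalSpace G] [TopologicalSpace S]
  {𝒢 : AmpleGroupoid G} {𝒮 : EtaleGroupoid S} (T : DiscreteTwist R 𝒢 𝒮)

/-- The action of `Rˣ` on `Σ`: `t • σ = i(r σ, t) σ`. -/
def act (t : Rˣ) (σ : S) : S := 𝒮.mul (T.i (𝒢.rng (T.q σ)) t) σ

/-- The function `1̃_X` associated to a subset `X ⊆ Σ`. -/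
noncomputable def tilde (X : Set S) : S → R := fun σ =>
  if h : ∃ t : Rˣ, σ ∈ T.act t '' X then (((Classical.choose h)⁻¹ : Rˣ) : R) else 0

/-- Membership in the twisted Steinberg algebra `A_R(G;Σ)`: locally constant,
`Rˣ`-contravariant functions with compact image of the support in `G`. -/
def MemA (f : S → R) : Prop :=
  IsLocallyConstant f ∧
  (∀ (t : Rˣ) (σ : S), f (T.act t σ) = ((t⁻¹ : Rˣ) : R) * f σ) ∧
  IsCompact (T.q '' Function.support f)

/-- A (not necessarily continuous) section of `q`. -/
noncomputable def sec : G → S := Function.surjInv T.q_surj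

/-- Convolution on `A_R(G;Σ)`, defined via the section `sec`. -/
noncomputable def conv (f g : S → R) : S → R := fun σ =>
  ∑ᶠ α : G,
    if 𝒢.rng α = 𝒢.rng (T.q σ) then
      f (T.sec α) * g (𝒮.mul (𝒮.inv (T.sec α)) σ) else 0

end DiscreteTwist

end

/-!
If `π f = π g` with `f ≠ g`, then `h = f - g` lies in `A_R(G; Σ)`, `π h = 0` and `h σ₀ = r ≠ 0`
for some `σ₀`. Convolving on the left with `1̃_X`, for a compact open bisection `X ∋ σ₀⁻¹`,
gives `k ∈ A_R(G; Σ)` with `k (s σ₀) = r` at the unit `s σ₀`. The non-unit arrows of `q (supp k)`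
form a compact set `C`; by effectiveness, finitely many compact open bisections covering `C` can
be dodged one after the other, which yields a nonempty compact open set `V ⊆ G⁽⁰⁾` on which `k`
is constant and such that no arrow of `C` has both source and range in `V`. For its lift `W`,
`1̃_W * k * 1̃_W = r 1̃_W`, so `π (r 1̃_W) = π 1̃_W π 1̃_X π h π 1̃_W = 0`.
-/

lemma isLocallyConstant_of_isClopen_eqOn {α β γ : Type*} [TopologicalSpace α]
    [TopologicalSpace β] [Zero γ] {U : Set α} (hU : IsClopen U) {g : β → γ}
    (hg : IsLocallyConstant g) {L : α → β} (hL : ContinuousOn L U) {k : α → γ}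
    (hkU : EqOn k (g ∘ L) U) (hk0 : EqOn k 0 Uᶜ) : IsLocallyConstant k := by
  refine (IsLocallyConstant.iff_eventually_eq k).mpr fun x => ?_
  by_cases hx : x ∈ U
  · have hU_nhds : U ∈ nhds x := hU.isOpen.mem_nhds hx
    filter_upwards [hU_nhds, (hL.continuousAt hU_nhds).tendsto.eventually (hg.eventually_eq (L x))]
      with y hy hgy
    rw [hkU hy, hkU hx]
    exact hgy
  · filter_upwards [hU.isClosed.isOpen_compl.mem_nhds hx] with y hy
    exact (hk0 hy).trans (hk0 hx).symm

namespace EtaleGroupoid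

section

variable {X : Type*} [TopologicalSpace X] (E : EtaleGroupoid X)

lemma src_src (g : X) : E.src (E.src g) = E.src g := by
  simpa only [E.inv_mul_self] using E.src_mul (E.inv g) g (E.src_inv g)

lemma rng_src (g : X) : E.rng (E.src g) = E.src g := by
  simpa only [E.inv_mul_self, E.rng_inv] using E.rng_mul (E.inv g) g (E.src_inv g)

lemma src_mem_unitSpace (g : X) : E.src g ∈ E.unitSpace := ⟨g, rfl⟩

lemma rng_mem_unitSpace (g : X) : E.rng g ∈ E.unitSpace := ⟨E.inv g, E.src_inv g⟩

lemma src_of_mem_unitSpace {u : X} (hu : u ∈ E.unitSpace) : E.src u = u := by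
  obtain ⟨g, rfl⟩ := hu
  exact E.src_src g

lemma rng_of_mem_unitSpace {u : X} (hu : u ∈ E.unitSpace) : E.rng u = u := by
  obtain ⟨g, rfl⟩ := hu
  exact E.rng_src g

lemma inv_of_mem_unitSpace {u : X} (hu : u ∈ E.unitSpace) : E.inv u = u := by
  simpa only [E.src_inv, E.rng_of_mem_unitSpace hu, E.inv_mul_self, E.src_of_mem_unitSpace hu]
    using (E.mul_src_self (E.inv u)).symm

lemma unitSpace_eq : E.unitSpace = {u | E.src u = u} :=
  Set.ext fun _ => ⟨E.src_of_mem_unitSpace, fun h => ⟨_, h⟩⟩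

lemma mul_cancel_right {a b c : X} (ha : E.src a = E.rng c) (hb : E.src b = E.rng c)
    (h : E.mul a c = E.mul b c) : a = b := by
  have key : ∀ x, E.src x = E.rng c → E.mul (E.mul x c) (E.inv c) = x := fun x hx => by
    rw [E.mul_assoc' x c (E.inv c) hx (E.rng_inv c).symm, E.mul_inv_self, ← hx, E.mul_src_self]
  rw [← key a ha, h, key b hb]

lemma mul_cancel_left {a b c : X} (ha : E.src c = E.rng a) (hb : E.src c = E.rng b)
    (h : E.mul c a = E.mul c b) : a = b := by
  have key : ∀ x, E.src c = E.rng x → E.mul (E.inv c) (E.mul c x) = x := fun x hx => by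
    rw [← E.mul_assoc' (E.inv c) c x (E.src_inv c) hx, E.inv_mul_self, hx, E.rng_mul_self]
  rw [← key a ha, h, key b hb]

lemma mul_inv_mul_of_rng_eq {a b : X} (h : E.rng a = E.rng b) :
    E.mul a (E.mul (E.inv a) b) = b := by
  rw [← E.mul_assoc' a (E.inv a) b (E.rng_inv a).symm (by rw [E.src_inv, h]), E.mul_inv_self,
    h, E.rng_mul_self]

lemma inv_mul_rev {a b : X} (h : E.src a = E.rng b) :
    E.inv (E.mul a b) = E.mul (E.inv b) (E.inv a) := by
  have hc : E.src (E.inv b) = E.rng (E.inv a) := by rw [E.src_inv, E.rng_inv, h]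
  have hb : E.src b = E.rng (E.mul (E.inv b) (E.inv a)) := by rw [E.rng_mul _ _ hc, E.rng_inv]
  refine E.mul_cancel_left (c := E.mul a b) (E.rng_inv _).symm
    (by rw [E.src_mul a b h, hb]) ?_
  rw [E.mul_inv_self, E.rng_mul a b h, E.mul_assoc' a b _ h hb,
    ← E.mul_assoc' b (E.inv b) (E.inv a) (E.rng_inv b).symm hc, E.mul_inv_self, ← h,
    ← E.rng_inv a, E.rng_mul_self, E.mul_inv_self]

lemma eq_of_inv_mul_mem_unitSpace {a b : X} (h : E.rng a = E.rng b)
    (hu : E.mul (E.inv a) b ∈ E.unitSpace) : a = b := by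
  have hc : E.src (E.inv a) = E.rng b := by rw [E.src_inv, h]
  have hsrc : E.mul (E.inv a) b = E.src a := by
    rw [← E.rng_of_mem_unitSpace hu, E.rng_mul _ _ hc, E.rng_inv]
  rw [← E.mul_inv_mul_of_rng_eq h, hsrc, E.mul_src_self]

lemma isBisection_of_subset_unitSpace {U : Set X} (hU : U ⊆ E.unitSpace) :
    E.IsBisection U := by
  refine ⟨fun a ha b hb hab => ?_, fun a ha b hb hab => ?_⟩
  · rwa [E.src_of_mem_unitSpace (hU ha), E.src_of_mem_unitSpace (hU hb)] at hab
  · rwa [E.rng_of_mem_unitSpace (hU ha), E.rng_of_mem_unitSpace (hU hb)] at hab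

lemma rng_eq_src_comp_inv : E.rng = E.src ∘ E.inv := funext fun g => (E.src_inv g).symm

lemma continuous_src : Continuous E.src := E.isLocalHomeomorph_src.continuous

lemma continuous_rng : Continuous E.rng := by
  rw [rng_eq_src_comp_inv]
  exact E.continuous_src.comp E.continuous_inv

lemma isOpenMap_src : IsOpenMap E.src := E.isLocalHomeomorph_src.isOpenMap

lemma isOpenMap_rng : IsOpenMap E.rng := by
  have hinv : IsOpenMap E.inv := fun U hU => by
    rw [Set.image_eq_preimage_of_inverse E.inv_inv E.inv_inv]
    exact hU.preimage E.continuous_inv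
  rw [rng_eq_src_comp_inv]
  exact E.isOpenMap_src.comp hinv

lemma isOpen_unitSpace : IsOpen E.unitSpace := E.isOpenMap_src.isOpen_range

lemma isClosed_unitSpace [T2Space X] : IsClosed E.unitSpace := by
  rw [unitSpace_eq]
  exact isClosed_eq E.continuous_src continuous_id

lemma continuousOn_mul_apply {Z : Type*} [TopologicalSpace Z] {f g : Z → X} {s : Set Z}
    (hf : ContinuousOn f s) (hg : ContinuousOn g s) (h : ∀ z ∈ s, E.src (f z) = E.rng (g z)) :
    ContinuousOn (fun z => E.mul (f z) (g z)) s :=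
  E.continuousOn_mul.comp (hf.prodMk hg) h

lemma IsCompact.setMul [T2Space X] {A B : Set X} (hA : IsCompact A) (hB : IsCompact B) :
    IsCompact (E.setMul A B) := by
  have hcomp : IsClosed {p : X × X | E.src p.1 = E.rng p.2} :=
    isClosed_eq (E.continuous_src.comp continuous_fst) (E.continuous_rng.comp continuous_snd)
  have himage : E.setMul A B = (fun p : X × X => E.mul p.1 p.2) ''
      (A ×ˢ B ∩ {p : X × X | E.src p.1 = E.rng p.2}) := by
    ext g
    constructor
    · rintro ⟨a, ha, b, hb, hab, rfl⟩
      exact ⟨(a, b), ⟨⟨ha, hb⟩, hab⟩, rfl⟩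
    · rintro ⟨⟨a, b⟩, ⟨⟨ha, hb⟩, hab⟩, rfl⟩
      exact ⟨a, ha, b, hb, hab, rfl⟩
  rw [himage]
  exact ((hA.prod hB).inter_right hcomp).image_of_continuousOn
    (E.continuousOn_mul.mono inter_subset_right)

end

section

variable {X : Type*} [TopologicalSpace X] [T2Space X] {E : EtaleGroupoid X}

lemma Effective.exists_isOpen_subset_forall_not_mem {U : Set X} (heff : E.Effective)
    (hU : IsOpen U) (hUinj : InjOn E.src U) (hUu : Disjoint U E.unitSpace)
    {W : Set X} (hW : IsOpen W) (hWne : W.Nonempty) :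
    ∃ V ⊆ W, IsOpen V ∧ V.Nonempty ∧ ∀ γ ∈ U, E.src γ ∈ V → E.rng γ ∉ V := by
  by_cases hUW : (U ∩ E.src ⁻¹' W).Nonempty
  swap
  · exact ⟨W, subset_rfl, hW, hWne, fun γ hγ hsrc => (hUW ⟨γ, hγ, hsrc⟩).elim⟩
  have hUW_open : IsOpen (U ∩ E.src ⁻¹' W) := hU.inter (hW.preimage E.continuous_src)
  -- a nonempty open set of non-units cannot lie in the isotropy
  obtain ⟨γ₀, hγ₀, hγ₀_iso⟩ : ∃ γ₀ ∈ U ∩ E.src ⁻¹' W, γ₀ ∉ E.iso := by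
    by_contra! h
    obtain ⟨γ, hγ⟩ := hUW
    have : γ ∈ interior E.iso := interior_maximal h hUW_open hγ
    rw [heff] at this
    exact hUu.notMem_of_mem_left hγ.1 this
  obtain ⟨Nr, Ns, hNr, hNs, hrNr, hsNs, hdisj⟩ := t2_separation hγ₀_iso
  refine ⟨Ns ∩ E.src '' (U ∩ E.src ⁻¹' W ∩ E.rng ⁻¹' Nr), ?_, ?_, ?_, ?_⟩
  · rintro _ ⟨-, γ, hγ, rfl⟩
    exact hγ.1.2
  · exact hNs.inter (E.isOpenMap_src _ (hUW_open.inter (hNr.preimage E.continuous_rng)))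
  · exact ⟨E.src γ₀, hsNs, γ₀, ⟨hγ₀, hrNr⟩, rfl⟩
  · rintro γ hγ ⟨-, γ', hγ', hsrc⟩ hrng
    obtain rfl : γ' = γ := hUinj hγ'.1.1 hγ hsrc
    exact hdisj.notMem_of_mem_left hγ'.2 hrng.1

lemma Effective.exists_isOpen_subset_forall_finset_not_mem {ι : Type*} (heff : E.Effective)
    (U : ι → Set X) (hU : ∀ i, IsOpen (U i) ∧ InjOn E.src (U i) ∧ Disjoint (U i) E.unitSpace)
    (s : Finset ι) {W : Set X} (hW : IsOpen W) (hWne : W.Nonempty) :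
    ∃ V ⊆ W, IsOpen V ∧ V.Nonempty ∧ ∀ i ∈ s, ∀ γ ∈ U i, E.src γ ∈ V → E.rng γ ∉ V := by
  induction s using Finset.induction_on with
  | empty => exact ⟨W, subset_rfl, hW, hWne, by simp⟩
  | insert i s _ ih =>
    obtain ⟨V', hV'W, hV', hV'ne, hV's⟩ := ih
    obtain ⟨V, hVV', hV, hVne, hVi⟩ :=
      heff.exists_isOpen_subset_forall_not_mem (hU i).1 (hU i).2.1 (hU i).2.2 hV' hV'ne
    refine ⟨V, hVV'.trans hV'W, hV, hVne, fun j hj γ hγ hsrc hrng => ?_⟩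
    rcases Finset.mem_insert.mp hj with rfl | hj
    · exact hVi γ hγ hsrc hrng
    · exact hV's j hj γ hγ (hVV' hsrc) (hVV' hrng)

lemma Effective.exists_isCompact_isOpen_subset_forall_not_mem {𝒢 : AmpleGroupoid X}
    (heff : 𝒢.Effective) {C : Set X} (hC : IsCompact C) (hCu : Disjoint C 𝒢.unitSpace)
    {W : Set X} (hW : IsOpen W) (hWne : W.Nonempty) :
    ∃ V ⊆ W, IsCompact V ∧ IsOpen V ∧ V.Nonempty ∧
      ∀ γ ∈ C, 𝒢.src γ ∈ V → 𝒢.rng γ ∉ V := by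
  let ι := {U : Set X // 𝒢.IsCOB U ∧ Disjoint U 𝒢.unitSpace}
  have hcover : C ⊆ ⋃ i : ι, i.1 := fun γ hγ => by
    obtain ⟨U, hU, hγU, hUsub⟩ := 𝒢.ample.exists_subset_of_mem_open
      (hCu.notMem_of_mem_left hγ) 𝒢.isClosed_unitSpace.isOpen_compl
    exact mem_iUnion.mpr ⟨⟨U, hU, disjoint_compl_left.mono_left hUsub⟩, hγU⟩
  obtain ⟨s, hCs⟩ := hC.elim_finite_subcover (fun i : ι => i.1) (fun i => i.2.1.2.1) hcover
  obtain ⟨V', hV'W, hV', ⟨v, hv⟩, hV's⟩ :=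
    heff.exists_isOpen_subset_forall_finset_not_mem (fun i : ι => i.1)
      (fun i => ⟨i.2.1.2.1, i.2.1.2.2.1, i.2.2⟩) s hW hWne
  obtain ⟨V, hV, hvV, hVV'⟩ := 𝒢.ample.exists_subset_of_mem_open hv hV'
  refine ⟨V, hVV'.trans hV'W, hV.1, hV.2.1, ⟨v, hvV⟩, fun γ hγ hsrc hrng => ?_⟩
  obtain ⟨i, hi, hγi⟩ := mem_iUnion₂.mp (hCs hγ)
  exact hV's i hi γ hγi (hVV' hsrc) (hVV' hrng)

end

end EtaleGroupoid

namespace DiscreteTwist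

open EtaleGroupoid

variable {R : Type*} [CommRing R] {G S : Type*} [TopologicalSpace G] [TopologicalSpace S]
  {𝒢 : AmpleGroupoid G} {𝒮 : EtaleGroupoid S} (T : DiscreteTwist R 𝒢 𝒮)

lemma q_i {x : G} (hx : x ∈ 𝒢.unitSpace) (t : Rˣ) : T.q (T.i x t) = x :=
  show T.i x t ∈ T.q ⁻¹' {x} by rw [T.exact' x hx]; exact ⟨t, rfl⟩

lemma i_inj {x : G} (hx : x ∈ 𝒢.unitSpace) {s t : Rˣ} (h : T.i x s = T.i x t) : s = t :=
  congrArg Prod.snd (T.i_injOn (mk_mem_prod hx (mem_univ s)) (mk_mem_prod hx (mem_univ t)) h)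

lemma eq_i_one {τ : S} (hτ : τ ∈ 𝒮.unitSpace) : τ = T.i (T.q τ) 1 := by
  rw [T.unit_eq] at hτ
  obtain ⟨x, hx, rfl⟩ := hτ
  rw [T.q_i hx]

lemma src_eq_i (σ : S) : 𝒮.src σ = T.i (𝒢.src (T.q σ)) 1 := by
  rw [T.eq_i_one (𝒮.src_mem_unitSpace σ), T.q_src]

lemma rng_eq_i (σ : S) : 𝒮.rng σ = T.i (𝒢.rng (T.q σ)) 1 := by
  rw [T.eq_i_one (𝒮.rng_mem_unitSpace σ), T.q_rng]

lemma rng_eq_rng_iff {σ τ : S} : 𝒮.rng σ = 𝒮.rng τ ↔ 𝒢.rng (T.q σ) = 𝒢.rng (T.q τ) := by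
  refine ⟨fun h => ?_, fun h => by rw [T.rng_eq_i, T.rng_eq_i, h]⟩
  rw [← T.q_rng, ← T.q_rng, h]

lemma src_i {x : G} (hx : x ∈ 𝒢.unitSpace) (t : Rˣ) : 𝒮.src (T.i x t) = T.i x 1 := by
  rw [T.src_eq_i, T.q_i hx, 𝒢.src_of_mem_unitSpace hx]

lemma rng_i {x : G} (hx : x ∈ 𝒢.unitSpace) (t : Rˣ) : 𝒮.rng (T.i x t) = T.i x 1 := by
  rw [T.rng_eq_i, T.q_i hx, 𝒢.rng_of_mem_unitSpace hx]

lemma inv_i {x : G} (hx : x ∈ 𝒢.unitSpace) (t : Rˣ) : 𝒮.inv (T.i x t) = T.i x t⁻¹ := by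
  refine (𝒮.mul_cancel_left (c := T.i x t) (by rw [T.src_i hx, T.rng_i hx])
    (𝒮.rng_inv _).symm ?_).symm
  rw [𝒮.mul_inv_self, T.i_mul x hx, mul_inv_cancel, T.rng_i hx]

lemma src_i_rng (σ : S) (t : Rˣ) : 𝒮.src (T.i (𝒢.rng (T.q σ)) t) = 𝒮.rng σ := by
  rw [T.src_i (𝒢.rng_mem_unitSpace _), T.rng_eq_i]

lemma q_act (t : Rˣ) (σ : S) : T.q (T.act t σ) = T.q σ := by
  rw [act, T.q_mul _ _ (T.src_i_rng σ t), T.q_i (𝒢.rng_mem_unitSpace _), 𝒢.rng_mul_self]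

lemma src_act (t : Rˣ) (σ : S) : 𝒮.src (T.act t σ) = 𝒮.src σ := by
  rw [T.src_eq_i, T.q_act, ← T.src_eq_i]

lemma rng_act (t : Rˣ) (σ : S) : 𝒮.rng (T.act t σ) = 𝒮.rng σ := by
  rw [T.rng_eq_i, T.q_act, ← T.rng_eq_i]

lemma act_one (σ : S) : T.act 1 σ = σ := by
  rw [act, ← T.rng_eq_i, 𝒮.rng_mul_self]

lemma act_act (t s : Rˣ) (σ : S) : T.act t (T.act s σ) = T.act (t * s) σ := by
  have hx := 𝒢.rng_mem_unitSpace (T.q σ)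
  rw [act, T.q_act, act, ← 𝒮.mul_assoc' _ _ _ (by rw [T.src_i hx, T.rng_i hx])
    (T.src_i_rng σ s), T.i_mul _ hx, act]

lemma act_inv_act (t : Rˣ) (σ : S) : T.act t⁻¹ (T.act t σ) = σ := by
  rw [T.act_act, inv_mul_cancel, T.act_one]

lemma act_cancel {s t : Rˣ} {σ : S} (h : T.act s σ = T.act t σ) : s = t :=
  T.i_inj (𝒢.rng_mem_unitSpace (T.q σ))
    (𝒮.mul_cancel_right (T.src_i_rng σ s) (T.src_i_rng σ t) h)

lemma exists_act_of_q_eq {σ τ : S} (h : T.q σ = T.q τ) : ∃ t : Rˣ, σ = T.act t τ := by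
  have hc : 𝒮.src σ = 𝒮.rng (𝒮.inv τ) := by rw [𝒮.rng_inv, T.src_eq_i, T.src_eq_i, h]
  have hq : T.q (𝒮.mul σ (𝒮.inv τ)) = 𝒢.rng (T.q τ) := by
    rw [T.q_mul _ _ hc, T.q_inv, h, 𝒢.mul_inv_self]
  have hmem : 𝒮.mul σ (𝒮.inv τ) ∈ T.q ⁻¹' {𝒢.rng (T.q τ)} := hq
  rw [T.exact' _ (𝒢.rng_mem_unitSpace _)] at hmem
  obtain ⟨t, ht⟩ := hmem
  refine ⟨t, ?_⟩
  rw [act, ← ht, 𝒮.mul_assoc' σ (𝒮.inv τ) τ hc (𝒮.src_inv τ), 𝒮.inv_mul_self,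
    ← hc.trans (𝒮.rng_inv τ), 𝒮.mul_src_self]

lemma act_mul {σ τ : S} (h : 𝒮.src σ = 𝒮.rng τ) (t : Rˣ) :
    T.act t (𝒮.mul σ τ) = 𝒮.mul (T.act t σ) τ := by
  rw [act, act, T.q_mul _ _ h, 𝒢.rng_mul _ _ (by rw [← T.q_src, ← T.q_rng, h]),
    𝒮.mul_assoc' _ _ _ (T.src_i_rng σ t) h]

lemma mul_act {σ τ : S} (h : 𝒮.src σ = 𝒮.rng τ) (t : Rˣ) :
    𝒮.mul σ (T.act t τ) = T.act t (𝒮.mul σ τ) := by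
  have hq : 𝒢.src (T.q σ) = 𝒢.rng (T.q τ) := by rw [← T.q_src, ← T.q_rng, h]
  rw [T.act_mul h, act, act, ← 𝒮.mul_assoc' σ _ τ
    (by rw [T.rng_i (𝒢.rng_mem_unitSpace _), T.src_eq_i, hq]) (T.src_i_rng τ t),
    ← hq, ← T.central σ t]

lemma inv_act (t : Rˣ) (σ : S) : 𝒮.inv (T.act t σ) = T.act t⁻¹ (𝒮.inv σ) := by
  rw [act, 𝒮.inv_mul_rev (T.src_i_rng σ t), T.inv_i (𝒢.rng_mem_unitSpace _), act, T.central,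
    T.q_inv, 𝒢.src_inv]

lemma exists_act_src_of_q_mem_unitSpace {σ : S} (h : T.q σ ∈ 𝒢.unitSpace) :
    ∃ t : Rˣ, σ = T.act t (𝒮.src σ) :=
  T.exists_act_of_q_eq (by rw [T.q_src, 𝒢.src_of_mem_unitSpace h])

lemma continuous_act (t : Rˣ) : Continuous (T.act t) := by
  have hrq : Continuous fun σ => 𝒢.rng (T.q σ) := 𝒢.continuous_rng.comp T.continuous_q
  refine continuousOn_univ.mp
    (𝒮.continuousOn_mul_apply ?_ continuousOn_id fun σ _ => T.src_i_rng σ t)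
  exact ((T.continuousOn_i t).comp_continuous hrq fun σ => 𝒢.rng_mem_unitSpace _).continuousOn

lemma isOpenMap_act (t : Rˣ) : IsOpenMap (T.act t) := fun U hU => by
  rw [image_eq_preimage_of_inverse (T.act_inv_act t)
    fun σ => by simpa using T.act_inv_act t⁻¹ σ]
  exact hU.preimage (T.continuous_act t⁻¹)

lemma exists_local_section (σ : S) :
    ∃ B : Set G, IsOpen B ∧ T.q σ ∈ B ∧ ∃ F : G → S, F (T.q σ) = σ ∧ ContinuousOn F B ∧
      (∀ γ ∈ B, T.q (F γ) = γ) ∧ ∀ V ⊆ B, IsOpen V → IsOpen (F '' V) := by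
  obtain ⟨B, hB, hσB, -, P, -, hqP, hFc, hFuniq, hFo⟩ := T.loc_triv (T.q σ)
  obtain ⟨⟨β, t⟩, ⟨hβ, hσ⟩, -⟩ := hFuniq σ hσB
  have hqF : ∀ γ ∈ B, T.q (𝒮.mul (T.i (𝒢.rng γ) t) (P γ)) = γ := fun γ hγ => by
    simpa only [act, hqP γ hγ] using T.q_act t (P γ)
  obtain rfl : β = T.q σ := (hqF β hβ).symm.trans (congrArg T.q hσ)
  exact ⟨B, hB, hσB, _, hσ, hFc t, hqF, hFo t⟩

lemma isOpenMap_q : IsOpenMap T.q := by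
  refine fun O hO => isOpen_iff_forall_mem_open.mpr ?_
  rintro _ ⟨σ, hσO, rfl⟩
  obtain ⟨B, hB, hσB, F, hFσ, hFc, hqF, -⟩ := T.exists_local_section σ
  exact ⟨B ∩ F ⁻¹' O, fun γ hγ => ⟨F γ, hγ.2, hqF γ hγ.1⟩, hFc.isOpen_inter_preimage hB hO, hσB,
    by rwa [mem_preimage, hFσ]⟩

lemma exists_isCOB_mem (T : DiscreteTwist R 𝒢 𝒮) (σ : S) : ∃ X, 𝒮.IsCOB X ∧ σ ∈ X := by
  obtain ⟨B, hB, hσB, F, hFσ, hFc, hqF, hFo⟩ := T.exists_local_section σ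
  obtain ⟨Y, ⟨hYc, hYo, hYs, hYr⟩, hσY, hYB⟩ := 𝒢.ample.exists_subset_of_mem_open hσB hB
  refine ⟨F '' Y, ⟨hYc.image_of_continuousOn (hFc.mono hYB), hFo Y hYB hYo, ?_, ?_⟩,
    T.q σ, hσY, hFσ⟩
  · rintro _ ⟨γ₁, h₁, rfl⟩ _ ⟨γ₂, h₂, rfl⟩ h
    rw [hYs h₁ h₂ (by rw [← hqF γ₁ (hYB h₁), ← hqF γ₂ (hYB h₂), ← T.q_src, ← T.q_src, h])]
  · rintro _ ⟨γ₁, h₁, rfl⟩ _ ⟨γ₂, h₂, rfl⟩ h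
    rw [hYr h₁ h₂ (by rw [← hqF γ₁ (hYB h₁), ← hqF γ₂ (hYB h₂), ← T.q_rng, ← T.q_rng, h])]

lemma isCompact_unitSpace_inter_preimage {V : Set G} (hVu : V ⊆ 𝒢.unitSpace)
    (hV : IsCompact V) : IsCompact (𝒮.unitSpace ∩ T.q ⁻¹' V) := by
  have : 𝒮.unitSpace ∩ T.q ⁻¹' V = (fun x => T.i x 1) '' V := by
    ext τ
    refine ⟨fun ⟨hτ, hqτ⟩ => ⟨T.q τ, hqτ, (T.eq_i_one hτ).symm⟩, ?_⟩
    rintro ⟨x, hx, rfl⟩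
    exact ⟨T.unit_eq ▸ ⟨x, hVu hx, rfl⟩, by rw [mem_preimage, T.q_i (hVu hx)]; exact hx⟩
  rw [this]
  exact hV.image_of_continuousOn ((T.continuousOn_i 1).mono hVu)

lemma exists_subset_unitSpace_forall_not_mem [T2Space G] (heff : 𝒢.Effective) {C : Set G}
    (hC : IsCompact C) (hCu : Disjoint C 𝒢.unitSpace) {O : Set S} (hO : IsOpen O)
    (hOu : (O ∩ 𝒮.unitSpace).Nonempty) :
    ∃ W ⊆ O ∩ 𝒮.unitSpace, W.Nonempty ∧ IsCompact W ∧ IsOpen W ∧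
      ∀ σ, T.q σ ∈ C → 𝒮.src σ ∈ W → 𝒮.rng σ ∉ W := by
  obtain ⟨V, hVD, hVc, hVo, ⟨v, hv⟩, hVC⟩ := heff.exists_isCompact_isOpen_subset_forall_not_mem
    hC hCu (T.isOpenMap_q _ (hO.inter 𝒮.isOpen_unitSpace)) (hOu.image T.q)
  have hVu : V ⊆ 𝒢.unitSpace := fun γ hγ => by
    obtain ⟨τ, hτ, rfl⟩ := hVD hγ
    exact T.q_unit_bij.mapsTo hτ.2
  refine ⟨𝒮.unitSpace ∩ T.q ⁻¹' V, fun τ ⟨hτ, hqτ⟩ => ?_, ⟨T.i v 1, ?_⟩,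
    T.isCompact_unitSpace_inter_preimage hVu hVc,
    𝒮.isOpen_unitSpace.inter (hVo.preimage T.continuous_q), fun σ hσC hs hr => ?_⟩
  · obtain ⟨τ', hτ', hq⟩ := hVD hqτ
    rwa [T.q_unit_bij.injOn hτ hτ'.2 hq.symm]
  · exact ⟨T.unit_eq ▸ ⟨v, hVu hv, rfl⟩, by rw [mem_preimage, T.q_i (hVu hv)]; exact hv⟩
  · exact hVC _ hσC (by rw [← T.q_src]; exact hs.2) (by rw [← T.q_rng]; exact hr.2)

variable {T}

/-- The support of an `Rˣ`-contravariant function is a union of fibres of `q`, so its image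
under the open surjection `q` is closed when the support is open. -/
lemma isClosed_q_image_support {f : S → R} (hf : IsLocallyConstant f)
    (hfe : ∀ (t : Rˣ) σ, f (T.act t σ) = ((t⁻¹ : Rˣ) : R) * f σ) :
    IsClosed (T.q '' support f) := by
  have hcompl : (T.q '' support f)ᶜ = T.q '' {σ | f σ = 0} := by
    ext γ
    obtain ⟨σ, rfl⟩ := T.q_surj γ
    refine ⟨fun h => ⟨σ, by_contra fun hσ => h ⟨σ, hσ, rfl⟩, rfl⟩, ?_⟩
    rintro ⟨τ, hτ, hqτ⟩ ⟨ρ, hρ, hqρ⟩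
    obtain ⟨t, rfl⟩ := T.exists_act_of_q_eq (hqρ.trans hqτ.symm)
    exact hρ (by rw [hfe, (hτ : f τ = 0), mul_zero])
  rw [← isOpen_compl_iff, hcompl]
  exact T.isOpenMap_q _ (hf.isOpen_fiber 0)

lemma memA_of_q_image_support_subset {f : S → R} (hf : IsLocallyConstant f)
    (hfe : ∀ (t : Rˣ) σ, f (T.act t σ) = ((t⁻¹ : Rˣ) : R) * f σ) {K : Set G}
    (hK : IsCompact K) (hsupp : T.q '' support f ⊆ K) : T.MemA f :=
  ⟨hf, hfe, hK.of_isClosed_subset (isClosed_q_image_support hf hfe) hsupp⟩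

lemma memA_zero : T.MemA 0 :=
  memA_of_q_image_support_subset (IsLocallyConstant.const 0) (by simp) isCompact_empty
    (by simp)

lemma MemA.sub {f g : S → R} (hf : T.MemA f) (hg : T.MemA g) : T.MemA (f - g) :=
  memA_of_q_image_support_subset (hf.1.sub hg.1)
    (fun t σ => by simp only [Pi.sub_apply, hf.2.1, hg.2.1, mul_sub])
    (hf.2.2.union hg.2.2) ((image_mono (support_sub f g)).trans (image_union _ _ _).subset)

lemma MemA.const_mul {f : S → R} (hf : T.MemA f) (r : R) : T.MemA fun σ => r * f σ :=
  memA_of_q_image_support_subset (hf.1.comp (r * ·))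
    (fun t σ => by simp only [hf.2.1]; ring) hf.2.2
    (image_mono (support_mul_subset_right _ f))

lemma tilde_act_of_mem {X : Set S} (hX : InjOn 𝒮.src X) {x : S} (hx : x ∈ X) (t : Rˣ) :
    T.tilde X (T.act t x) = ((t⁻¹ : Rˣ) : R) := by
  have hex : ∃ s : Rˣ, T.act t x ∈ T.act s '' X := ⟨t, x, hx, rfl⟩
  obtain ⟨y, hy, hyx⟩ := Classical.choose_spec hex
  obtain rfl : y = x := hX hy hx (by rw [← T.src_act (Classical.choose hex), hyx, T.src_act])
  rw [tilde, dif_pos hex, T.act_cancel hyx]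

lemma tilde_apply_self {X : Set S} (hX : InjOn 𝒮.src X) {x : S} (hx : x ∈ X) :
    T.tilde X x = 1 := by
  simpa only [T.act_one, inv_one, Units.val_one] using tilde_act_of_mem (T := T) hX hx 1

lemma tilde_eq_zero {X : Set S} {σ : S} (h : T.q σ ∉ T.q '' X) : T.tilde X σ = 0 := by
  refine dif_neg fun ⟨t, x, hx, hxσ⟩ => h ⟨x, hx, ?_⟩
  rw [← hxσ, T.q_act]

lemma tilde_act {X : Set S} (hX : InjOn 𝒮.src X) (t : Rˣ) (σ : S) :
    T.tilde X (T.act t σ) = ((t⁻¹ : Rˣ) : R) * T.tilde X σ := by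
  by_cases h : T.q σ ∈ T.q '' X
  · obtain ⟨x, hx, hqx⟩ := h
    obtain ⟨s, rfl⟩ := T.exists_act_of_q_eq hqx.symm
    rw [T.act_act, tilde_act_of_mem hX hx, tilde_act_of_mem hX hx, mul_inv_rev, Units.val_mul,
      mul_comm]
  · rw [tilde_eq_zero h, tilde_eq_zero (by rwa [T.q_act]), mul_zero]

lemma memA_tilde [T2Space G] {X : Set S} (hX : 𝒮.IsCOB X) : T.MemA (T.tilde X) := by
  obtain ⟨hXc, hXo, hXb⟩ := hX
  have hqX : IsCompact (T.q '' X) := hXc.image T.continuous_q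
  refine memA_of_q_image_support_subset ?_ (tilde_act hXb.1) hqX ?_
  · refine (IsLocallyConstant.iff_exists_open _).mpr fun σ => ?_
    by_cases h : T.q σ ∈ T.q '' X
    · obtain ⟨x, hx, hqx⟩ := h
      obtain ⟨t, rfl⟩ := T.exists_act_of_q_eq hqx.symm
      refine ⟨T.act t '' X, T.isOpenMap_act t X hXo, ⟨x, hx, rfl⟩, ?_⟩
      rintro _ ⟨y, hy, rfl⟩
      rw [tilde_act_of_mem hXb.1 hy, tilde_act_of_mem hXb.1 hx]
    · refine ⟨(T.q ⁻¹' (T.q '' X))ᶜ, (hqX.isClosed.preimage T.continuous_q).isOpen_compl, h,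
        fun τ hτ => ?_⟩
      rw [tilde_eq_zero hτ, tilde_eq_zero h]
  · rintro _ ⟨σ, hσ, rfl⟩
    by_contra h
    exact hσ (tilde_eq_zero h)

lemma q_sec (α : G) : T.q (T.sec α) = α := surjInv_eq T.q_surj α

lemma conv_tilde_apply_of_mem {X : Set S} (hX : 𝒮.IsBisection X) {f : S → R}
    (hfe : ∀ (t : Rˣ) σ, f (T.act t σ) = ((t⁻¹ : Rˣ) : R) * f σ) {x σ : S} (hx : x ∈ X)
    (hxσ : 𝒮.rng x = 𝒮.rng σ) :
    T.conv (T.tilde X) f σ = f (𝒮.mul (𝒮.inv x) σ) := by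
  have hr : 𝒢.rng (T.q x) = 𝒢.rng (T.q σ) := T.rng_eq_rng_iff.mp hxσ
  rw [conv, finsum_eq_single _ (T.q x)]
  · obtain ⟨s, hs⟩ := T.exists_act_of_q_eq (q_sec (T.q x))
    rw [if_pos hr, hs, tilde_act_of_mem hX.1 hx, T.inv_act,
      ← T.act_mul (by rw [𝒮.src_inv, hxσ]) s⁻¹, hfe, _root_.inv_inv, ← mul_assoc, ← Units.val_mul,
      inv_mul_cancel, Units.val_one, one_mul]
  · intro α hα
    split_ifs with hαr
    · rw [tilde_eq_zero, zero_mul]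
      rintro ⟨y, hy, hqy⟩
      rw [q_sec] at hqy
      subst hqy
      exact hα (congrArg T.q (hX.2 hy hx (T.rng_eq_rng_iff.mpr (hαr.trans hr.symm))))
    · rfl

lemma conv_tilde_apply_of_forall_ne {X : Set S} {f : S → R} {σ : S}
    (h : ∀ x ∈ X, 𝒮.rng x ≠ 𝒮.rng σ) : T.conv (T.tilde X) f σ = 0 := by
  refine finsum_eq_zero_of_forall_eq_zero fun α => ?_
  split_ifs with hαr
  · rw [tilde_eq_zero, zero_mul]
    rintro ⟨y, hy, hqy⟩
    rw [q_sec] at hqy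
    subst hqy
    exact h y hy (T.rng_eq_rng_iff.mpr hαr)
  · rfl

lemma conv_tilde_of_subset_unitSpace {W : Set S} (hW : W ⊆ 𝒮.unitSpace) {f : S → R}
    (hfe : ∀ (t : Rˣ) σ, f (T.act t σ) = ((t⁻¹ : Rˣ) : R) * f σ) (σ : S) :
    T.conv (T.tilde W) f σ = if 𝒮.rng σ ∈ W then f σ else 0 := by
  split_ifs with h
  · rw [conv_tilde_apply_of_mem (𝒮.isBisection_of_subset_unitSpace hW) hfe h
      (𝒮.rng_of_mem_unitSpace (𝒮.rng_mem_unitSpace σ)),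
      𝒮.inv_of_mem_unitSpace (𝒮.rng_mem_unitSpace σ), 𝒮.rng_mul_self]
  · refine conv_tilde_apply_of_forall_ne fun x hx hxσ => h ?_
    rwa [← hxσ, 𝒮.rng_of_mem_unitSpace (hW hx)]

lemma conv_tilde_right_of_subset_unitSpace {W : Set S} (hW : W ⊆ 𝒮.unitSpace) {f : S → R}
    (hfe : ∀ (t : Rˣ) σ, f (T.act t σ) = ((t⁻¹ : Rˣ) : R) * f σ) (σ : S) :
    T.conv f (T.tilde W) σ = if 𝒮.src σ ∈ W then f σ else 0 := by
  rw [conv, finsum_eq_single _ (T.q σ)]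
  · obtain ⟨s, hs⟩ := T.exists_act_of_q_eq (q_sec (T.q σ))
    have hm : 𝒮.mul (𝒮.inv (T.act s σ)) σ = T.act s⁻¹ (𝒮.src σ) := by
      rw [T.inv_act, ← T.act_mul (𝒮.src_inv σ), 𝒮.inv_mul_self]
    rw [if_pos rfl, hs, hm, hfe]
    split_ifs with h
    · rw [tilde_act_of_mem (𝒮.isBisection_of_subset_unitSpace hW).1 h, _root_.inv_inv, mul_comm,
        ← mul_assoc, Units.mul_inv, one_mul]
    · rw [tilde_eq_zero, mul_zero]
      rintro ⟨w, hw, hqw⟩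
      rw [T.q_act] at hqw
      exact h (T.q_unit_bij.injOn (hW hw) (𝒮.src_mem_unitSpace σ) hqw ▸ hw)
  · intro α hα
    split_ifs with hαr
    · rw [tilde_eq_zero, mul_zero]
      intro hmem
      have hc : 𝒮.src (𝒮.inv (T.sec α)) = 𝒮.rng σ := by
        rw [𝒮.src_inv, T.rng_eq_rng_iff, q_sec]
        exact hαr
      have hunit := (T.q_unit_bij.mapsTo.mono_left hW).image_subset hmem
      rw [T.q_mul _ _ hc, T.q_inv, q_sec] at hunit
      exact hα (𝒢.eq_of_inv_mul_mem_unitSpace hαr hunit)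
    · rfl

lemma isClopen_preimage_rng_image [T2Space G] (T : DiscreteTwist R 𝒢 𝒮) {X : Set S}
    (hX : 𝒮.IsCOB X) :
    IsClopen (𝒮.rng ⁻¹' (𝒮.rng '' X)) := by
  have hUq : 𝒮.rng ⁻¹' (𝒮.rng '' X) = (fun σ => 𝒢.rng (T.q σ)) ⁻¹' (𝒢.rng '' (T.q '' X)) := by
    ext σ
    simp only [mem_preimage, mem_image, exists_exists_and_eq_and, T.rng_eq_rng_iff]
  refine ⟨?_, (𝒮.isOpenMap_rng X hX.2.1).preimage 𝒮.continuous_rng⟩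
  rw [hUq]
  exact ((hX.1.image T.continuous_q).image 𝒢.continuous_rng).isClosed.preimage
    (𝒢.continuous_rng.comp T.continuous_q)

lemma isLocallyConstant_conv_tilde [T2Space G] {X : Set S} (hX : 𝒮.IsCOB X) {f : S → R}
    (hf : T.MemA f) : IsLocallyConstant (T.conv (T.tilde X) f) := by
  rcases isEmpty_or_nonempty S with hS | hS
  · exact IsLocallyConstant.of_constant _ fun σ => isEmptyElim σ
  -- on `r⁻¹(r X)` the convolution is `σ ↦ f (x_σ⁻¹ σ)` with `x_σ ∈ X`, `r x_σ = r σ`, and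
  -- `σ ↦ x_σ` is continuous since `r` is open and injective on `X`
  set φ := invFunOn 𝒮.rng X
  have hφ : ∀ σ ∈ 𝒮.rng ⁻¹' (𝒮.rng '' X), φ (𝒮.rng σ) ∈ X ∧ 𝒮.rng (φ (𝒮.rng σ)) = 𝒮.rng σ :=
    fun σ hσ => ⟨invFunOn_mem hσ, invFunOn_eq hσ⟩
  have hφc : ContinuousOn φ (𝒮.rng '' X) :=
    (𝒮.isOpenMap_rng.domRestrict hX.2.1).continuousOn_image_of_leftInvOn
      hX.2.2.2.leftInvOn_invFunOn
  refine isLocallyConstant_of_isClopen_eqOn (T.isClopen_preimage_rng_image hX) hf.1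
    (L := fun σ => 𝒮.mul (𝒮.inv (φ (𝒮.rng σ))) σ) ?_
    (fun σ hσ => conv_tilde_apply_of_mem hX.2.2 hf.2.1 (hφ σ hσ).1 (hφ σ hσ).2)
    (fun σ hσ => conv_tilde_apply_of_forall_ne fun x hx hxσ => hσ ⟨x, hx, hxσ⟩)
  refine 𝒮.continuousOn_mul_apply ?_ continuousOn_id fun σ hσ => by rw [𝒮.src_inv, (hφ σ hσ).2]
  exact 𝒮.continuous_inv.comp_continuousOn
    (hφc.comp 𝒮.continuous_rng.continuousOn fun σ hσ => hσ)

lemma memA_conv_tilde [T2Space G] {X : Set S} (hX : 𝒮.IsCOB X) {f : S → R} (hf : T.MemA f) :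
    T.MemA (T.conv (T.tilde X) f) := by
  have hequiv : ∀ (t : Rˣ) σ, T.conv (T.tilde X) f (T.act t σ) =
      ((t⁻¹ : Rˣ) : R) * T.conv (T.tilde X) f σ := by
    intro t σ
    by_cases hσ : ∃ x ∈ X, 𝒮.rng x = 𝒮.rng σ
    · obtain ⟨x, hx, hxσ⟩ := hσ
      rw [conv_tilde_apply_of_mem hX.2.2 hf.2.1 hx (hxσ.trans (T.rng_act t σ).symm),
        conv_tilde_apply_of_mem hX.2.2 hf.2.1 hx hxσ, T.mul_act (by rw [𝒮.src_inv, hxσ]),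
        hf.2.1]
    · have hne : ∀ x ∈ X, 𝒮.rng x ≠ 𝒮.rng σ := fun x hx hxσ => hσ ⟨x, hx, hxσ⟩
      rw [conv_tilde_apply_of_forall_ne (by rwa [T.rng_act]), conv_tilde_apply_of_forall_ne hne,
        mul_zero]
  refine memA_of_q_image_support_subset (isLocallyConstant_conv_tilde hX hf) hequiv
    (IsCompact.setMul 𝒢.toEtaleGroupoid (hX.1.image T.continuous_q) hf.2.2) ?_
  rintro _ ⟨σ, hσ, rfl⟩
  obtain ⟨x, hx, hxσ⟩ : ∃ x ∈ X, 𝒮.rng x = 𝒮.rng σ :=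
    by_contra fun h => hσ (conv_tilde_apply_of_forall_ne fun x hx hxσ => h ⟨x, hx, hxσ⟩)
  rw [mem_support, conv_tilde_apply_of_mem hX.2.2 hf.2.1 hx hxσ] at hσ
  have hc : 𝒮.src x = 𝒮.rng (𝒮.mul (𝒮.inv x) σ) := by
    rw [𝒮.rng_mul _ _ (by rw [𝒮.src_inv, hxσ]), 𝒮.rng_inv]
  refine ⟨T.q x, ⟨x, hx, rfl⟩, _, ⟨_, hσ, rfl⟩, by rw [← T.q_src, ← T.q_rng, hc], ?_⟩
  rw [← T.q_mul _ _ hc, 𝒮.mul_inv_mul_of_rng_eq hxσ]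

lemma exists_conv_conv_tilde_eq_const_mul_tilde [T2Space G] (heff : 𝒢.Effective) {k : S → R}
    (hk : T.MemA k) {ρ : S} (hρ : ρ ∈ 𝒮.unitSpace) :
    ∃ W ⊆ 𝒮.unitSpace, W.Nonempty ∧ IsCompact W ∧ IsOpen W ∧
      T.conv (T.conv (T.tilde W) k) (T.tilde W) = fun σ => k ρ * T.tilde W σ := by
  obtain ⟨O, hO, hρO, hkO⟩ := hk.1.exists_open ρ
  obtain ⟨W, hWO, hWne, hWc, hWo, hWC⟩ := T.exists_subset_unitSpace_forall_not_mem heff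
    (hk.2.2.inter_right 𝒢.isOpen_unitSpace.isClosed_compl)
    (disjoint_compl_left.mono_left inter_subset_right) hO ⟨ρ, hρO, hρ⟩
  have hWu : W ⊆ 𝒮.unitSpace := fun τ hτ => (hWO hτ).2
  have hWb := 𝒮.isBisection_of_subset_unitSpace hWu
  refine ⟨W, hWu, hWne, hWc, hWo, funext fun σ => ?_⟩
  rw [conv_tilde_right_of_subset_unitSpace hWu (memA_conv_tilde ⟨hWc, hWo, hWb⟩ hk).2.1,
    conv_tilde_of_subset_unitSpace hWu hk.2.1]
  by_cases hσu : T.q σ ∈ 𝒢.unitSpace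
  · obtain ⟨t, ht⟩ := T.exists_act_src_of_q_mem_unitSpace hσu
    have hrs : 𝒮.rng σ = 𝒮.src σ := by
      rw [T.rng_eq_i, T.src_eq_i, 𝒢.rng_of_mem_unitSpace hσu, 𝒢.src_of_mem_unitSpace hσu]
    rw [hrs]
    split_ifs with h
    · have hkσ : k σ = ((t⁻¹ : Rˣ) : R) * k ρ := by rw [ht, hk.2.1, hkO _ (hWO h).1]
      rw [hkσ, ht, tilde_act_of_mem hWb.1 h, mul_comm]
    · refine (mul_eq_zero_of_right _ (tilde_eq_zero ?_)).symm
      rintro ⟨w, hw, hqw⟩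
      refine h (T.q_unit_bij.injOn (hWu hw) (𝒮.src_mem_unitSpace σ) ?_ ▸ hw)
      rw [hqw, T.q_src, 𝒢.src_of_mem_unitSpace hσu]
  · rw [tilde_eq_zero fun ⟨w, hw, hqw⟩ => hσu (hqw ▸ T.q_unit_bij.mapsTo (hWu hw)), mul_zero]
    split_ifs with hs hr <;> try rfl
    by_contra hkσ
    exact hWC σ ⟨⟨σ, hkσ, rfl⟩, hσu⟩ hs hr

lemma exists_conv_tilde_eq_apply_mul_tilde [T2Space G] (heff : 𝒢.Effective) {h : S → R}
    (hh : T.MemA h) (σ₀ : S) :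
    ∃ X W, 𝒮.IsCOB X ∧ W ⊆ 𝒮.unitSpace ∧ W.Nonempty ∧ IsCompact W ∧ IsOpen W ∧
      T.conv (T.conv (T.tilde W) (T.conv (T.tilde X) h)) (T.tilde W) =
        fun σ => h σ₀ * T.tilde W σ := by
  obtain ⟨X, hX, hσX⟩ := T.exists_isCOB_mem (𝒮.inv σ₀)
  have hkσ₀ : T.conv (T.tilde X) h (𝒮.src σ₀) = h σ₀ := by
    rw [conv_tilde_apply_of_mem hX.2.2 hh.2.1 hσX (by rw [𝒮.rng_inv, 𝒮.rng_src]), 𝒮.inv_inv,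
      𝒮.mul_src_self]
  obtain ⟨W, hW⟩ := exists_conv_conv_tilde_eq_const_mul_tilde heff (memA_conv_tilde hX hh)
    (𝒮.src_mem_unitSpace σ₀)
  exact ⟨X, W, hX, hkσ₀ ▸ hW⟩

end DiscreteTwist

open EtaleGroupoid DiscreteTwist in
theorem stmt_10_general {R : Type*} [CommRing R] {G S : Type*}
    [TopologicalSpace G] [TopologicalSpace S] [T2Space G]
    {𝒢 : AmpleGroupoid G} {𝒮 : EtaleGroupoid S} (T : DiscreteTwist R 𝒢 𝒮)
    (heff : 𝒢.Effective)
    {Q : Type*} [Ring Q] (π : (S → R) → Q)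
    (hzero : π 0 = 0)
    (hadd : ∀ f g, T.MemA f → T.MemA g → π (f + g) = π f + π g)
    (hmul : ∀ f g, T.MemA f → T.MemA g → π (T.conv f g) = π f * π g) :
    Set.InjOn π {f | T.MemA f} ↔
      ∀ W : Set S, W ⊆ 𝒮.unitSpace → W.Nonempty → IsCompact W → IsOpen W →
        ∀ r : R, r ≠ 0 → π (fun σ => r * T.tilde W σ) ≠ 0 := by
  constructor
  · intro hinj W hWu ⟨w, hw⟩ hWc hWo r hr hπ
    have hWb := 𝒮.isBisection_of_subset_unitSpace hWu
    have h0 := congrFun (hinj ((memA_tilde ⟨hWc, hWo, hWb⟩).const_mul r) memA_zero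
      (hπ.trans hzero.symm)) w
    simp only [tilde_apply_self hWb.1 hw, mul_one, Pi.zero_apply] at h0
    exact hr h0
  · intro hnz f hf g hg hfg
    by_contra hne
    obtain ⟨σ₀, hσ₀⟩ := Function.ne_iff.mp hne
    have hh : T.MemA (f - g) := MemA.sub hf hg
    have hπh : π (f - g) = 0 := by
      have := hadd _ _ hh hg
      rw [sub_add_cancel, hfg] at this
      exact add_eq_right.mp this.symm
    obtain ⟨X, W, hX, hWu, hWne, hWc, hWo, hW⟩ :=
      exists_conv_tilde_eq_apply_mul_tilde heff hh σ₀
    have hWX : 𝒮.IsCOB W := ⟨hWc, hWo, 𝒮.isBisection_of_subset_unitSpace hWu⟩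
    refine hnz W hWu hWne hWc hWo _ (sub_ne_zero.mpr hσ₀) ?_
    change π (fun σ => (f - g) σ₀ * T.tilde W σ) = 0
    rw [← hW, hmul _ _ (memA_conv_tilde hWX (memA_conv_tilde hX hh)) (memA_tilde hWX),
      hmul _ _ (memA_tilde hWX) (memA_conv_tilde hX hh), hmul _ _ (memA_tilde hX) hh, hπh,
      mul_zero, mul_zero, zero_mul]

/-- Cuntz–Krieger uniqueness theorem: for an effective ample
Hausdorff groupoid `G` and a discrete twist with
`X_Σ = {u ∈ Σ⁽⁰⁾ : Σᵤᵘ ⊆ Iso(Σ)°}` dense in `Σ⁽⁰⁾`, a ring homomorphism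
`π : A_R(G;Σ) → Q` is injective iff `π (r 1̃_W) ≠ 0` for every nonempty compact
open `W ⊆ Σ⁽⁰⁾` and every nonzero `r ∈ R`. -/
theorem stmt_10 {R : Type*} [CommRing R] {G S : Type*}
    [TopologicalSpace G] [TopologicalSpace S] [T2Space G] [T2Space S]
    {𝒢 : AmpleGroupoid G} {𝒮 : EtaleGroupoid S} (T : DiscreteTwist R 𝒢 𝒮)
    (heff : 𝒢.Effective)
    (hdense : 𝒮.unitSpace ⊆
      closure {u ∈ 𝒮.unitSpace | 𝒮.isoAt u ⊆ interior 𝒮.iso})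
    {Q : Type*} [Ring Q] (π : (S → R) → Q)
    (hzero : π 0 = 0)
    (hadd : ∀ f g, T.MemA f → T.MemA g → π (f + g) = π f + π g)
    (hmul : ∀ f g, T.MemA f → T.MemA g → π (T.conv f g) = π f * π g) :
    Set.InjOn π {f | T.MemA f} ↔
      ∀ W : Set S, W ⊆ 𝒮.unitSpace → W.Nonempty → IsCompact W → IsOpen W →
        ∀ r : R, r ≠ 0 → π (fun σ => r * T.tilde W σ) ≠ 0 :=
  stmt_10_general T heff π hzero hadd hmul
end

section
/- Let G be an effective ample Hausdorff second-countable groupoid, R a field, and σ : G⁽²⁾ → Rˣ a continuous 2-cocycle. Let Q be a ring and π : A_R(G; σ) → Q a ring homomorphism. Then π is injective if and only if π(1_W) ≠ 0 for every nonempty compact open subset W of G⁽⁰⁾. -/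
open Set Function TopologicalSpace Classical
/-!
Injectivity gives `π(1_W) ≠ 0` because `1_W ≠ 0`. Conversely, let `f ≠ 0` with `π f = 0` and
`f γ ≠ 0`. For a compact open bisection `B ∋ γ`, the element `h = 1_{B⁻¹} * f` of the kernel has
`h(s γ) = c(γ⁻¹, γ) f γ ≠ 0`. The part of the support of `h` off `G⁽⁰⁾` is compact open, hence a
finite union of open bisections disjoint from `G⁽⁰⁾`. As the interior of the isotropy is `G⁽⁰⁾`, none
of them is isotropy over an open set of units, so a neighbourhood of `s γ` in `G⁽⁰⁾` shrinks to a
nonempty compact open `W` on which `h` is constant and such that no arrow of `supp h \ G⁽⁰⁾` has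
both ends in `W`. Then `1_W * h * 1_W = h(s γ) · 1_W`, so `1_W` lies in the kernel as well.
-/

open Filter Topology

theorem IsCompact.continuousOn_invFunOn {X Y : Type*} [TopologicalSpace X] [TopologicalSpace Y]
    [T2Space Y] [Nonempty X] {p : X → Y} (hp : Continuous p) {K : Set X} (hK : IsCompact K)
    (hinj : InjOn p K) : ContinuousOn (invFunOn p K) (p '' K) := by
  have : CompactSpace K := isCompact_iff_compactSpace.mp hK
  let e : K ≃ₜ p '' K := Continuous.homeoOfEquivCompactToT2 (f := Equiv.Set.imageOfInjOn p K hinj)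
    ((hp.comp continuous_subtype_val).subtype_mk fun k => mem_image_of_mem p k.2)
  rw [continuousOn_iff_continuous_domRestrict]
  convert continuous_subtype_val.comp e.symm.continuous using 1
  funext ⟨y, hy⟩
  refine hinj (invFunOn_mem hy) (e.symm ⟨y, hy⟩).2 ?_
  rw [invFunOn_eq hy]
  exact (congrArg Subtype.val (e.apply_symm_apply ⟨y, hy⟩)).symm

namespace EtaleGroupoid

variable {G : Type u} [TopologicalSpace G] (𝒢 : EtaleGroupoid G)

lemma src_src_s11 (g : G) : 𝒢.src (𝒢.src g) = 𝒢.src g := by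
  have := 𝒢.src_mul (𝒢.inv g) g (𝒢.src_inv g)
  rwa [𝒢.inv_mul_self] at this

lemma rng_src_s11 (g : G) : 𝒢.rng (𝒢.src g) = 𝒢.src g := by
  have := 𝒢.rng_mul (𝒢.inv g) g (𝒢.src_inv g)
  rwa [𝒢.inv_mul_self, 𝒢.rng_inv] at this

lemma src_mem_unitSpace_s11 (g : G) : 𝒢.src g ∈ 𝒢.unitSpace := ⟨g, rfl⟩

lemma rng_mem_unitSpace_s11 (g : G) : 𝒢.rng g ∈ 𝒢.unitSpace := ⟨𝒢.inv g, 𝒢.src_inv g⟩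

lemma mem_unitSpace_iff {u : G} : u ∈ 𝒢.unitSpace ↔ 𝒢.src u = u :=
  ⟨by rintro ⟨g, rfl⟩; exact 𝒢.src_src_s11 g, fun h => ⟨u, h⟩⟩

lemma rng_of_mem_unitSpace_s11 {u : G} (hu : u ∈ 𝒢.unitSpace) : 𝒢.rng u = u := by
  obtain ⟨g, rfl⟩ := hu
  exact 𝒢.rng_src_s11 g

lemma inv_of_mem_unitSpace_s11 {u : G} (hu : u ∈ 𝒢.unitSpace) : 𝒢.inv u = u :=
  calc 𝒢.inv u = 𝒢.mul (𝒢.inv u) (𝒢.src (𝒢.inv u)) := (𝒢.mul_src_self _).symm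
    _ = 𝒢.mul (𝒢.inv u) u := by rw [𝒢.src_inv, 𝒢.rng_of_mem_unitSpace_s11 hu]
    _ = u := by rw [𝒢.inv_mul_self, 𝒢.mem_unitSpace_iff.1 hu]

lemma injOn_rng_of_subset_unitSpace {W : Set G} (hW : W ⊆ 𝒢.unitSpace) : InjOn 𝒢.rng W :=
  fun u hu v hv h => by rwa [𝒢.rng_of_mem_unitSpace_s11 (hW hu), 𝒢.rng_of_mem_unitSpace_s11 (hW hv)] at h

lemma inv_mul_cancel_left {a b : G} (h : 𝒢.src a = 𝒢.rng b) :
    𝒢.mul (𝒢.inv a) (𝒢.mul a b) = b := by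
  rw [← 𝒢.mul_assoc' _ _ _ (𝒢.src_inv a) h, 𝒢.inv_mul_self, h, 𝒢.rng_mul_self]

lemma mul_inv_cancel_left {a γ : G} (h : 𝒢.rng a = 𝒢.rng γ) :
    𝒢.mul a (𝒢.mul (𝒢.inv a) γ) = γ := by
  rw [← 𝒢.mul_assoc' _ _ _ (𝒢.rng_inv a).symm ((𝒢.src_inv a).trans h), 𝒢.mul_inv_self, h,
    𝒢.rng_mul_self]

lemma continuous_src_s11 : Continuous 𝒢.src := 𝒢.isLocalHomeomorph_src.continuous

lemma isOpenMap_src_s11 : IsOpenMap 𝒢.src := 𝒢.isLocalHomeomorph_src.isOpenMap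

lemma rng_eq_src_comp_inv_s11 : 𝒢.rng = 𝒢.src ∘ 𝒢.inv := funext fun g => (𝒢.src_inv g).symm

lemma continuous_rng_s11 : Continuous 𝒢.rng := by
  rw [rng_eq_src_comp_inv_s11]
  exact 𝒢.continuous_src_s11.comp 𝒢.continuous_inv

lemma setInv_eq_preimage (U : Set G) : 𝒢.setInv U = 𝒢.inv ⁻¹' U :=
  congrFun (Function.Involutive.image_eq_preimage_symm 𝒢.inv_inv) U

lemma isOpen_setInv {U : Set G} (hU : IsOpen U) : IsOpen (𝒢.setInv U) := by
  rw [setInv_eq_preimage]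
  exact hU.preimage 𝒢.continuous_inv

lemma isCompact_setInv {U : Set G} (hU : IsCompact U) : IsCompact (𝒢.setInv U) :=
  hU.image 𝒢.continuous_inv

lemma injOn_rng_setInv {U : Set G} (hU : InjOn 𝒢.src U) : InjOn 𝒢.rng (𝒢.setInv U) := by
  rintro _ ⟨a, ha, rfl⟩ _ ⟨b, hb, rfl⟩ h
  rw [𝒢.rng_inv, 𝒢.rng_inv] at h
  rw [hU ha hb h]

lemma isOpenMap_rng_s11 : IsOpenMap 𝒢.rng := fun U hU => by
  rw [rng_eq_src_comp_inv_s11, image_comp]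
  exact 𝒢.isOpenMap_src_s11 _ (𝒢.isOpen_setInv hU)

lemma isOpen_unitSpace_s11 : IsOpen 𝒢.unitSpace := 𝒢.isOpenMap_src_s11.isOpen_range

lemma isClosed_unitSpace_s11 [T2Space G] : IsClosed 𝒢.unitSpace := by
  have : 𝒢.unitSpace = {u | 𝒢.src u = u} := Set.ext fun _ => 𝒢.mem_unitSpace_iff
  rw [this]
  exact isClosed_eq 𝒢.continuous_src_s11 continuous_id

lemma isCompact_setMul [T2Space G] {A K : Set G} (hA : IsCompact A) (hK : IsCompact K) :
    IsCompact (𝒢.setMul A K) := by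
  have hcl : IsClosed {p : G × G | 𝒢.src p.1 = 𝒢.rng p.2} :=
    isClosed_eq (𝒢.continuous_src_s11.comp continuous_fst) (𝒢.continuous_rng_s11.comp continuous_snd)
  have himg : 𝒢.setMul A K =
      (fun p : G × G => 𝒢.mul p.1 p.2) '' (A ×ˢ K ∩ {p | 𝒢.src p.1 = 𝒢.rng p.2}) := by
    ext γ
    constructor
    · rintro ⟨a, ha, b, hb, hab, rfl⟩
      exact ⟨(a, b), ⟨⟨ha, hb⟩, hab⟩, rfl⟩
    · rintro ⟨⟨a, b⟩, ⟨⟨ha, hb⟩, hab⟩, rfl⟩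
      exact ⟨a, ha, b, hb, hab, rfl⟩
  rw [himg]
  exact ((hA.prod hK).inter_right hcl).image_of_continuousOn
    (𝒢.continuousOn_mul.mono inter_subset_right)

lemma continuousAt_mul {X : Type*} [TopologicalSpace X] {φ ψ : X → G} {x : X}
    (hφ : ContinuousAt φ x) (hψ : ContinuousAt ψ x)
    (h : ∀ᶠ y in 𝓝 x, 𝒢.src (φ y) = 𝒢.rng (ψ y)) :
    ContinuousAt (fun y => 𝒢.mul (φ y) (ψ y)) x :=
  (𝒢.continuousOn_mul.continuousWithinAt h.self_of_nhds).tendsto.comp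
    (tendsto_nhdsWithin_iff.2 ⟨hφ.prodMk_nhds hψ, h⟩)

lemma eventually_cocycle_eq {Z : Type*} {c : G → G → Z}
    (hc : IsLocallyConstant fun p : {p : G × G // 𝒢.src p.1 = 𝒢.rng p.2} => c p.1.1 p.1.2)
    {X : Type*} [TopologicalSpace X] {φ ψ : X → G} {x : X}
    (hφ : ContinuousAt φ x) (hψ : ContinuousAt ψ x)
    (h : ∀ᶠ y in 𝓝 x, 𝒢.src (φ y) = 𝒢.rng (ψ y)) :
    ∀ᶠ y in 𝓝 x, c (φ y) (ψ y) = c (φ x) (ψ x) :=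
  (tendsto_nhdsWithin_iff.2 ⟨hφ.prodMk_nhds hψ, h⟩).eventually
    ((eventually_nhds_subtype_iff {p : G × G | 𝒢.src p.1 = 𝒢.rng p.2}
      ⟨(φ x, ψ x), h.self_of_nhds⟩ (fun p => c p.1 p.2 = c (φ x) (ψ x))).1 (hc.eventually_eq _))

section Convolution

variable {R : Type w} [CommRing R] (c : G → G → Rˣ)

lemma convC_apply_eq_of_unique {f g : G → R} {γ : G} (p : G × G) (hp : 𝒢.src p.1 = 𝒢.rng p.2)
    (hpγ : 𝒢.mul p.1 p.2 = γ)
    (huniq : ∀ q : G × G, 𝒢.src q.1 = 𝒢.rng q.2 → 𝒢.mul q.1 q.2 = γ → f q.1 ≠ 0 → g q.2 ≠ 0 →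
      q = p) :
    𝒢.convC c f g γ = c p.1 p.2 * f p.1 * g p.2 := by
  refine (finsum_eq_single _ p fun q hq => ?_).trans (if_pos ⟨hp, hpγ⟩)
  split_ifs with hqγ
  · by_contra hne
    exact hq (huniq q hqγ.1 hqγ.2 (right_ne_zero_of_mul (left_ne_zero_of_mul hne))
      (right_ne_zero_of_mul hne))
  · rfl

lemma convC_apply_eq_zero {f g : G → R} {γ : G}
    (h : ∀ q : G × G, 𝒢.src q.1 = 𝒢.rng q.2 → 𝒢.mul q.1 q.2 = γ → f q.1 ≠ 0 → g q.2 = 0) :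
    𝒢.convC c f g γ = 0 :=
  finsum_eq_zero_of_forall_eq_zero fun q => by
    split_ifs with hqγ
    · by_cases hf : f q.1 = 0
      · rw [hf, mul_zero, zero_mul]
      · rw [h q hqγ.1 hqγ.2 hf, mul_zero]
    · rfl

lemma convC_indicator_apply_of_mem (κ : R) (f : G → R) {A : Set G} (hA : InjOn 𝒢.rng A)
    {a γ : G} (ha : a ∈ A) (haγ : 𝒢.rng a = 𝒢.rng γ) :
    𝒢.convC c (A.indicator fun _ => κ) f γ =
      c a (𝒢.mul (𝒢.inv a) γ) * κ * f (𝒢.mul (𝒢.inv a) γ) := by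
  have hcomp : 𝒢.src a = 𝒢.rng (𝒢.mul (𝒢.inv a) γ) := by
    rw [𝒢.rng_mul _ _ (by rw [𝒢.src_inv, haγ]), 𝒢.rng_inv]
  rw [𝒢.convC_apply_eq_of_unique c (a, 𝒢.mul (𝒢.inv a) γ) hcomp (𝒢.mul_inv_cancel_left haγ),
    indicator_of_mem ha]
  rintro ⟨α, β⟩ hαβ rfl hα -
  have hαA : α ∈ A := by
    by_contra h
    exact hα (indicator_of_notMem h _)
  obtain rfl : α = a := hA hαA ha (by rw [haγ, 𝒢.rng_mul _ _ hαβ])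
  rw [𝒢.inv_mul_cancel_left hαβ]

lemma convC_indicator_apply_of_notMem (κ : R) (f : G → R) {A : Set G} {γ : G}
    (hγ : 𝒢.rng γ ∉ 𝒢.rng '' A) : 𝒢.convC c (A.indicator fun _ => κ) f γ = 0 :=
  𝒢.convC_apply_eq_zero c fun ⟨α, β⟩ hαβ hαβγ hα => absurd hαβγ fun h => hγ
    ⟨α, by by_contra hαA; exact hα (indicator_of_notMem hαA _), by rw [← h, 𝒢.rng_mul _ _ hαβ]⟩

lemma convC_indicator_apply_of_subset_unitSpace (hc : ∀ g, c (𝒢.rng g) g = 1) {W : Set G}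
    (hW : W ⊆ 𝒢.unitSpace) (κ : R) (f : G → R) (γ : G) :
    𝒢.convC c (W.indicator fun _ => κ) f γ = if 𝒢.rng γ ∈ W then κ * f γ else 0 := by
  split_ifs with hγ
  · rw [𝒢.convC_indicator_apply_of_mem c κ f (𝒢.injOn_rng_of_subset_unitSpace hW) hγ
      (𝒢.rng_of_mem_unitSpace_s11 (𝒢.rng_mem_unitSpace_s11 γ)),
      𝒢.inv_of_mem_unitSpace_s11 (𝒢.rng_mem_unitSpace_s11 γ), 𝒢.rng_mul_self, hc, Units.val_one, one_mul]
  · refine 𝒢.convC_indicator_apply_of_notMem c κ f ?_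
    rintro ⟨u, hu, hur⟩
    rw [𝒢.rng_of_mem_unitSpace_s11 (hW hu)] at hur
    exact hγ (hur ▸ hu)

lemma convC_apply_indicator_of_subset_unitSpace (hc : ∀ g, c g (𝒢.src g) = 1) {W : Set G}
    (hW : W ⊆ 𝒢.unitSpace) (κ : R) (f : G → R) (γ : G) :
    𝒢.convC c f (W.indicator fun _ => κ) γ = if 𝒢.src γ ∈ W then f γ * κ else 0 := by
  have hβ : ∀ β : G, (W.indicator fun _ => κ) β ≠ 0 → β ∈ W := fun β hβ => by
    by_contra h
    exact hβ (indicator_of_notMem h _)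
  split_ifs with hγ
  · rw [𝒢.convC_apply_eq_of_unique c (γ, 𝒢.src γ) (𝒢.rng_src_s11 γ).symm (𝒢.mul_src_self γ), hc,
      indicator_of_mem hγ, Units.val_one, one_mul]
    rintro ⟨α, β⟩ hαβ rfl - hβ0
    obtain rfl : β = 𝒢.src α := (𝒢.rng_of_mem_unitSpace_s11 (hW (hβ β hβ0))).symm.trans hαβ.symm
    rw [𝒢.mul_src_self]
  · refine 𝒢.convC_apply_eq_zero c fun ⟨α, β⟩ hαβ hαβγ _ => ?_
    by_contra hβ0
    have hβW := hβ β hβ0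
    rw [← hαβγ, 𝒢.src_mul _ _ hαβ, 𝒢.mem_unitSpace_iff.1 (hW hβW)] at hγ
    exact hγ hβW

lemma convC_indicator_indicator_of_subset_unitSpace (hc : ∀ g, c (𝒢.rng g) g = 1) {W : Set G}
    (hW : W ⊆ 𝒢.unitSpace) (κ κ' : R) :
    𝒢.convC c (W.indicator fun _ => κ) (W.indicator fun _ => κ') = W.indicator fun _ => κ * κ' := by
  funext γ
  rw [𝒢.convC_indicator_apply_of_subset_unitSpace c hc hW]
  by_cases hγ : γ ∈ W
  · rw [𝒢.rng_of_mem_unitSpace_s11 (hW hγ), if_pos hγ, indicator_of_mem hγ, indicator_of_mem hγ]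
  · simp only [indicator_of_notMem hγ, mul_zero, ite_self]

lemma convC_convC_indicator_eq_indicator
    (hc : ∀ g, c (𝒢.rng g) g = 1 ∧ c g (𝒢.src g) = 1) {W : Set G} (hW : W ⊆ 𝒢.unitSpace)
    {h : G → R} {a : R} (hWa : ∀ x ∈ W, h x = a)
    (hoff : ∀ γ ∉ 𝒢.unitSpace, 𝒢.src γ ∈ W → 𝒢.rng γ ∈ W → h γ = 0) :
    𝒢.convC c (𝒢.convC c (W.indicator fun _ => 1) h) (W.indicator fun _ => 1) =
      W.indicator fun _ => a := by
  funext γ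
  rw [𝒢.convC_apply_indicator_of_subset_unitSpace c (fun g => (hc g).2) hW,
    𝒢.convC_indicator_apply_of_subset_unitSpace c (fun g => (hc g).1) hW]
  by_cases hγ : γ ∈ 𝒢.unitSpace
  · rw [𝒢.mem_unitSpace_iff.1 hγ, 𝒢.rng_of_mem_unitSpace_s11 hγ]
    by_cases hγW : γ ∈ W
    · simp only [if_pos hγW, indicator_of_mem hγW, hWa γ hγW, one_mul, mul_one]
    · simp only [if_neg hγW, indicator_of_notMem hγW]
  · rw [indicator_of_notMem fun hγW => hγ (hW hγW)]
    split_ifs with hs hr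
    · rw [hoff γ hγ hs hr, mul_zero, mul_one]
    · rw [zero_mul]
    · rfl

end Convolution

section Steinberg

variable {R : Type w} [CommRing R]

variable (G R) in
def steinbergAddSubgroup : AddSubgroup (G → R) where
  carrier := {f | MemSt f}
  zero_mem' := ⟨IsLocallyConstant.const 0, ∅, isCompact_empty, by simp⟩
  add_mem' := fun ⟨hf, K, hK, hfK⟩ ⟨hg, L, hL, hgL⟩ =>
    ⟨hf.add hg, K ∪ L, hK.union hL, (support_add _ _).trans (union_subset_union hfK hgL)⟩
  neg_mem' := fun ⟨hf, K, hK, hfK⟩ => ⟨hf.neg, K, hK, by rwa [support_neg]⟩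

lemma memSt_indicator [T2Space G] {V : Set G} (hVc : IsCompact V) (hVo : IsOpen V) (κ : R) :
    MemSt (V.indicator fun _ => κ) :=
  ⟨(LocallyConstant.indicator (LocallyConstant.const G κ) ⟨hVc.isClosed, hVo⟩).isLocallyConstant,
    V, hVc, support_indicator_subset⟩

variable (c : G → G → Rˣ)

lemma isLocallyConstant_convC_indicator [T2Space G]
    (hc : IsLocallyConstant fun p : {p : G × G // 𝒢.src p.1 = 𝒢.rng p.2} => c p.1.1 p.1.2)
    {A : Set G} (hAc : IsCompact A) (hAo : IsOpen A) (hA : InjOn 𝒢.rng A) {f : G → R}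
    (hf : IsLocallyConstant f) : IsLocallyConstant (𝒢.convC c (A.indicator fun _ => 1) f) := by
  have hS : IsClopen (𝒢.rng '' A) := ⟨(hAc.image 𝒢.continuous_rng_s11).isClosed, 𝒢.isOpenMap_rng_s11 A hAo⟩
  refine (IsLocallyConstant.iff_eventually_eq _).2 fun x => ?_
  by_cases hx : 𝒢.rng x ∈ 𝒢.rng '' A
  · have : Nonempty G := ⟨x⟩
    set a : G → G := fun y => invFunOn 𝒢.rng A (𝒢.rng y)
    set b : G → G := fun y => 𝒢.mul (𝒢.inv (a y)) y
    have hS_nhds : ∀ᶠ y in 𝓝 x, 𝒢.rng y ∈ 𝒢.rng '' A :=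
      (hS.isOpen.preimage 𝒢.continuous_rng_s11).mem_nhds hx
    have hsrc : ∀ y, 𝒢.rng y ∈ 𝒢.rng '' A → 𝒢.src (𝒢.inv (a y)) = 𝒢.rng y := fun y hy => by
      rw [𝒢.src_inv, invFunOn_eq hy]
    have hcomp : ∀ y, 𝒢.rng y ∈ 𝒢.rng '' A → 𝒢.src (a y) = 𝒢.rng (b y) := fun y hy => by
      rw [𝒢.rng_mul _ _ (hsrc y hy), 𝒢.rng_inv]
    have hform : ∀ y, 𝒢.rng y ∈ 𝒢.rng '' A →
        𝒢.convC c (A.indicator fun _ => 1) f y = c (a y) (b y) * f (b y) := fun y hy => by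
      rw [𝒢.convC_indicator_apply_of_mem c 1 f hA (invFunOn_mem hy) (invFunOn_eq hy), mul_one]
    have ha : ContinuousAt a x :=
      ((hAc.continuousOn_invFunOn 𝒢.continuous_rng_s11 hA).continuousAt
        (hS.isOpen.mem_nhds hx)).comp 𝒢.continuous_rng_s11.continuousAt
    have hb : ContinuousAt b x := 𝒢.continuousAt_mul (𝒢.continuous_inv.continuousAt.comp ha)
      continuousAt_id (hS_nhds.mono hsrc)
    filter_upwards [hS_nhds, 𝒢.eventually_cocycle_eq hc ha hb (hS_nhds.mono hcomp),
      hb.eventually (hf.eventually_eq (b x))] with y hy hcy hfy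
    rw [hform y hy, hform x hx, hcy, hfy]
  · filter_upwards [(hS.isClosed.isOpen_compl.preimage 𝒢.continuous_rng_s11).mem_nhds hx] with y hy
    rw [𝒢.convC_indicator_apply_of_notMem c 1 f hy, 𝒢.convC_indicator_apply_of_notMem c 1 f hx]

lemma memSt_convC_indicator [T2Space G]
    (hc : IsLocallyConstant fun p : {p : G × G // 𝒢.src p.1 = 𝒢.rng p.2} => c p.1.1 p.1.2)
    {A : Set G} (hAc : IsCompact A) (hAo : IsOpen A) (hA : InjOn 𝒢.rng A) {f : G → R}
    (hf : MemSt f) : MemSt (𝒢.convC c (A.indicator fun _ => 1) f) := by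
  refine ⟨𝒢.isLocallyConstant_convC_indicator c hc hAc hAo hA hf.1, ?_⟩
  obtain ⟨K, hKc, hfK⟩ := hf.2
  refine ⟨𝒢.setMul A K, 𝒢.isCompact_setMul hAc hKc, fun γ hγ => ?_⟩
  by_cases hγA : 𝒢.rng γ ∈ 𝒢.rng '' A
  · obtain ⟨a, ha, haγ⟩ := hγA
    rw [mem_support, 𝒢.convC_indicator_apply_of_mem c 1 f hA ha haγ] at hγ
    refine ⟨a, ha, _, hfK (right_ne_zero_of_mul hγ), ?_, (𝒢.mul_inv_cancel_left haγ).symm⟩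
    rw [𝒢.rng_mul _ _ (by rw [𝒢.src_inv, haγ]), 𝒢.rng_inv]
  · exact absurd (𝒢.convC_indicator_apply_of_notMem c 1 f hγA) hγ

end Steinberg

lemma exists_isOpen_subset_forall_rng_notMem [T2Space G] (heff : 𝒢.Effective) {D : Set G}
    (hDo : IsOpen D) (hD : InjOn 𝒢.src D) (hDu : Disjoint D 𝒢.unitSpace) {U : Set G}
    (hUo : IsOpen U) (hU : U.Nonempty) :
    ∃ W ⊆ U, IsOpen W ∧ W.Nonempty ∧ ∀ d ∈ D, 𝒢.src d ∈ W → 𝒢.rng d ∉ W := by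
  by_cases hmove : ∃ d ∈ D, 𝒢.src d ∈ U ∧ 𝒢.rng d ≠ 𝒢.src d
  · obtain ⟨d, hd, hdU, hne⟩ := hmove
    obtain ⟨V₁, V₂, hV₁, hV₂, hrd, hsd, hV⟩ := t2_separation hne
    refine ⟨U ∩ V₂ ∩ 𝒢.src '' (D ∩ 𝒢.rng ⁻¹' V₁), inter_subset_left.trans inter_subset_left,
      (hUo.inter hV₂).inter (𝒢.isOpenMap_src_s11 _ (hDo.inter (hV₁.preimage 𝒢.continuous_rng_s11))),
      ⟨𝒢.src d, ⟨hdU, hsd⟩, d, ⟨hd, hrd⟩, rfl⟩, ?_⟩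
    rintro d' hd' ⟨-, d'', ⟨hd'', hrd''⟩, hs⟩ ⟨⟨-, hrd'⟩, -⟩
    obtain rfl : d'' = d' := hD hd'' hd' hs
    exact disjoint_left.1 hV hrd'' hrd'
  · push Not at hmove
    refine ⟨U, subset_rfl, hUo, hU, fun d hd hdU _ => ?_⟩
    have hiso : D ∩ 𝒢.src ⁻¹' U ⊆ interior 𝒢.iso :=
      interior_maximal (fun d hd => hmove d hd.1 hd.2) (hDo.inter (hUo.preimage 𝒢.continuous_src_s11))
    rw [heff] at hiso
    exact disjoint_left.1 hDu hd (hiso ⟨hd, hdU⟩)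

lemma exists_isOpen_subset_forall_rng_notMem_sUnion [T2Space G] (heff : 𝒢.Effective)
    {𝒟 : Set (Set G)} (h𝒟 : 𝒟.Finite)
    (hD : ∀ D ∈ 𝒟, IsOpen D ∧ InjOn 𝒢.src D ∧ Disjoint D 𝒢.unitSpace) {U : Set G}
    (hUo : IsOpen U) (hU : U.Nonempty) :
    ∃ W ⊆ U, IsOpen W ∧ W.Nonempty ∧ ∀ d ∈ ⋃₀ 𝒟, 𝒢.src d ∈ W → 𝒢.rng d ∉ W := by
  induction 𝒟, h𝒟 using Set.Finite.induction_on with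
  | empty => exact ⟨U, subset_rfl, hUo, hU, by simp⟩
  | @insert D 𝒟 _ _ ih =>
    obtain ⟨W, hWU, hWo, hW, hW𝒟⟩ := ih fun D' hD' => hD D' (mem_insert_of_mem D hD')
    obtain ⟨hDo, hDinj, hDu⟩ := hD D (mem_insert D 𝒟)
    obtain ⟨W', hW'W, hW'o, hW', hW'D⟩ :=
      𝒢.exists_isOpen_subset_forall_rng_notMem heff hDo hDinj hDu hWo hW
    refine ⟨W', hW'W.trans hWU, hW'o, hW', ?_⟩
    rw [sUnion_insert]
    rintro d (hd | hd) hsd hrd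
    · exact hW'D d hd hsd hrd
    · exact hW𝒟 d hd (hW'W hsd) (hW'W hrd)

end EtaleGroupoid

namespace AmpleGroupoid

variable {G : Type u} [TopologicalSpace G] [T2Space G] (𝒢 : AmpleGroupoid G)

lemma exists_subset_unitSpace_forall_eq_and_forall_eq_zero {R : Type w} [CommRing R]
    (heff : 𝒢.Effective) {h : G → R} (hh : EtaleGroupoid.MemSt h) {u : G} (hu : u ∈ 𝒢.unitSpace) :
    ∃ W ⊆ 𝒢.unitSpace, W.Nonempty ∧ IsCompact W ∧ IsOpen W ∧ (∀ x ∈ W, h x = h u) ∧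
      ∀ γ ∉ 𝒢.unitSpace, 𝒢.src γ ∈ W → 𝒢.rng γ ∈ W → h γ = 0 := by
  have hsupp : IsClopen (support h) := (hh.1.isClopen_fiber 0).compl
  obtain ⟨K, hKc, hhK⟩ := hh.2
  obtain ⟨𝒟, h𝒟, hD⟩ := eq_finite_iUnion_of_isTopologicalBasis_of_isCompact_open
    ((↑) : {U : Set G | 𝒢.IsCOB U} → Set G) (by rw [Subtype.range_coe]; exact 𝒢.ample)
    (support h \ 𝒢.unitSpace) ((hKc.of_isClosed_subset hsupp.isClosed hhK).diff 𝒢.isOpen_unitSpace_s11)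
    (hsupp.isOpen.sdiff 𝒢.isClosed_unitSpace_s11)
  obtain ⟨W', hW'U, hW'o, ⟨w, hw⟩, hW'𝒟⟩ :=
    𝒢.exists_isOpen_subset_forall_rng_notMem_sUnion heff (h𝒟.image (↑))
      (by
        rintro _ ⟨D, hD𝒟, rfl⟩
        obtain ⟨-, hDo, hDinj, -⟩ := D.2
        refine ⟨hDo, hDinj, disjoint_left.2 fun d hd => ?_⟩
        have : d ∈ support h \ 𝒢.unitSpace := hD ▸ mem_biUnion hD𝒟 hd
        exact this.2)
      ((hh.1.isOpen_fiber (h u)).inter 𝒢.isOpen_unitSpace_s11) ⟨u, rfl, hu⟩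
  obtain ⟨W, ⟨hWc, hWo, -⟩, hwW, hWW'⟩ := 𝒢.ample.exists_subset_of_mem_open hw hW'o
  refine ⟨W, fun x hx => (hW'U (hWW' hx)).2, ⟨w, hwW⟩, hWc, hWo, fun x hx => (hW'U (hWW' hx)).1,
    fun γ hγ hsγ hrγ => ?_⟩
  by_contra hγ0
  refine hW'𝒟 γ ?_ (hWW' hsγ) (hWW' hrγ)
  rw [sUnion_image, ← hD]
  exact ⟨hγ0, hγ⟩

theorem exists_indicator_map_eq_zero {R : Type w} [Field R] (heff : 𝒢.Effective) {c : G → G → Rˣ}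
    (hc : 𝒢.IsCocycle c) {Q : Type*} [Ring Q] {π : (G → R) → Q}
    (hmul : ∀ f g : G → R, EtaleGroupoid.MemSt f → EtaleGroupoid.MemSt g →
      π (𝒢.convC c f g) = π f * π g)
    {f : G → R} (hf : EtaleGroupoid.MemSt f) (hf0 : f ≠ 0) (hπf : π f = 0) :
    ∃ W ⊆ 𝒢.unitSpace, W.Nonempty ∧ IsCompact W ∧ IsOpen W ∧
      π (W.indicator fun _ => (1 : R)) = 0 := by
  obtain ⟨hclc, -, hnorm⟩ := hc
  obtain ⟨γ, hγ⟩ := Function.ne_iff.1 hf0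
  obtain ⟨B, ⟨hBc, hBo, hBs, -⟩, hγB, -⟩ :=
    𝒢.ample.exists_subset_of_mem_open (mem_univ γ) isOpen_univ
  have hAc := 𝒢.isCompact_setInv hBc
  have hAo := 𝒢.isOpen_setInv hBo
  have hA := 𝒢.injOn_rng_setInv hBs
  set h := 𝒢.convC c ((𝒢.setInv B).indicator fun _ => 1) f with hdef
  have hh : EtaleGroupoid.MemSt h := 𝒢.memSt_convC_indicator c hclc hAc hAo hA hf
  have hπh : π h = 0 := by
    rw [hmul _ _ (EtaleGroupoid.memSt_indicator hAc hAo 1) hf, hπf, mul_zero]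
  have hhγ : h (𝒢.src γ) ≠ 0 := by
    rw [hdef, 𝒢.convC_indicator_apply_of_mem c 1 f hA (mem_image_of_mem _ hγB)
      ((𝒢.rng_inv γ).trans (𝒢.rng_src_s11 γ).symm), 𝒢.inv_inv, 𝒢.mul_src_self, mul_one]
    exact mul_ne_zero (Units.ne_zero _) hγ
  obtain ⟨W, hWu, hW, hWc, hWo, hWh, hoff⟩ :=
    𝒢.exists_subset_unitSpace_forall_eq_and_forall_eq_zero heff hh (𝒢.src_mem_unitSpace_s11 γ)
  refine ⟨W, hWu, hW, hWc, hWo, ?_⟩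
  have hW1 := EtaleGroupoid.memSt_indicator hWc hWo (1 : R)
  have hWh1 := 𝒢.memSt_convC_indicator c hclc hWc hWo (𝒢.injOn_rng_of_subset_unitSpace hWu) hh
  have hcompress := 𝒢.convC_convC_indicator_eq_indicator c hnorm hWu hWh hoff
  calc π (W.indicator fun _ => 1)
      = π (𝒢.convC c (W.indicator fun _ => (h (𝒢.src γ))⁻¹)
          (W.indicator fun _ => h (𝒢.src γ))) := by
        rw [𝒢.convC_indicator_indicator_of_subset_unitSpace c (fun g => (hnorm g).1) hWu,
          inv_mul_cancel₀ hhγ]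
    _ = π (W.indicator fun _ => (h (𝒢.src γ))⁻¹) * (π (W.indicator fun _ => 1) * π h *
          π (W.indicator fun _ => 1)) := by
        rw [hmul _ _ (EtaleGroupoid.memSt_indicator hWc hWo _)
          (EtaleGroupoid.memSt_indicator hWc hWo _), ← hcompress, hmul _ _ hWh1 hW1,
          hmul _ _ hW1 hh]
    _ = 0 := by rw [hπh, mul_zero, zero_mul, mul_zero]

end AmpleGroupoid

theorem stmt_11_general {R : Type*} [Field R] {G : Type*}
    [TopologicalSpace G] [T2Space G]
    (𝒢 : AmpleGroupoid G) (heff : 𝒢.Effective)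
    (c : G → G → Rˣ) (hc : 𝒢.IsCocycle c)
    {Q : Type*} [Ring Q] (π : (G → R) → Q)
    (hadd : ∀ f g : G → R, EtaleGroupoid.MemSt f → EtaleGroupoid.MemSt g → π (f + g) = π f + π g)
    (hmul : ∀ f g : G → R, EtaleGroupoid.MemSt f → EtaleGroupoid.MemSt g → π (𝒢.convC c f g) = π f * π g) :
    Set.InjOn π {f : G → R | EtaleGroupoid.MemSt f} ↔
      ∀ W : Set G, W ⊆ 𝒢.unitSpace → W.Nonempty → IsCompact W → IsOpen W →
        π (W.indicator fun _ => (1 : R)) ≠ 0 := by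
  let φ : EtaleGroupoid.steinbergAddSubgroup G R →+ Q :=
    AddMonoidHom.mk' (fun f => π f) fun f g => hadd f g f.2 g.2
  rw [show Set.InjOn π {f | EtaleGroupoid.MemSt f} ↔ Function.Injective φ from
    Set.injOn_iff_injective, injective_iff_map_eq_zero]
  constructor
  · rintro hφ W - ⟨w, hw⟩ hWc hWo hπW
    have := congrFun (congrArg Subtype.val
      (hφ ⟨_, EtaleGroupoid.memSt_indicator hWc hWo 1⟩ hπW)) w
    simp [indicator_of_mem hw] at this
  · intro hW f hπf
    by_contra hf0
    obtain ⟨W, hWu, hWne, hWc, hWo, hπW⟩ := 𝒢.exists_indicator_map_eq_zero heff hc hmul f.2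
      (fun h => hf0 (Subtype.ext h)) hπf
    exact hW W hWu hWne hWc hWo hπW

/-- for an effective ample Hausdorff second-countable groupoid
`G`, a field `R` and a continuous 2-cocycle `σ : G⁽²⁾ → Rˣ`, a ring homomorphism
`π : A_R(G;σ) → Q` is injective iff `π(1_W) ≠ 0` for every nonempty compact open
`W ⊆ G⁽⁰⁾`. -/
theorem stmt_11 {R : Type*} [Field R] {G : Type*}
    [TopologicalSpace G] [T2Space G] [SecondCountableTopology G]
    (𝒢 : AmpleGroupoid G) (heff : 𝒢.Effective)
    (c : G → G → Rˣ) (hc : 𝒢.IsCocycle c)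
    {Q : Type*} [Ring Q] (π : (G → R) → Q)
    (hzero : π 0 = 0)
    (hadd : ∀ f g : G → R, EtaleGroupoid.MemSt f → EtaleGroupoid.MemSt g → π (f + g) = π f + π g)
    (hmul : ∀ f g : G → R, EtaleGroupoid.MemSt f → EtaleGroupoid.MemSt g → π (𝒢.convC c f g) = π f * π g) :
    Set.InjOn π {f : G → R | EtaleGroupoid.MemSt f} ↔
      ∀ W : Set G, W ⊆ 𝒢.unitSpace → W.Nonempty → IsCompact W → IsOpen W →
        π (W.indicator fun _ => (1 : R)) ≠ 0 :=
  stmt_11_general 𝒢 heff c hc π hadd hmul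
end
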